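/- arXiv:2402.00189 — 8 statements merged into one kernel-verified Lean document; each statement's English description precedes it below -/
import Mathlib

section
/- Let G be a connected finite simple graph on at least 2 vertices. Then ω(G) = eq_1(G) ≤ eq(G) ≤ max{ω(G), α(G)}. Moreover, if G has diameter 2, then eq(G) = max{ω(G), α(G)}. -/
open SimpleGraph

/-- `S` is a `t`-equidistant set of `G`: all distinct vertices of `S` are at distance
exactly `t` in `G`. -/
def IsEquidistantSet {V : Type*} (G : SimpleGraph V) (t : ℕ) (S : Finset V) : Prop :=
  (S : Set V).Pairwise fun u v => G.dist u v = t

/-- The `t`-equidistant number of `G`: the maximum size of a `t`-equidistant set. -/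
noncomputable def eqNum {V : Type*} [Fintype V] (G : SimpleGraph V) (t : ℕ) : ℕ :=
  sSup {n : ℕ | ∃ S : Finset V, IsEquidistantSet G t S ∧ S.card = n}

/-- `S` is a `t`-independent set of `G`: all distinct vertices of `S` are at pairwise
distance greater than `t` in `G`. -/
def IsTIndepSet {V : Type*} (G : SimpleGraph V) (t : ℕ) (S : Finset V) : Prop :=
  (S : Set V).Pairwise fun u v => t < G.dist u v

/-- The `t`-independence number of `G`. -/
noncomputable def indepNumT {V : Type*} [Fintype V] (G : SimpleGraph V) (t : ℕ) : ℕ :=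
  sSup {n : ℕ | ∃ S : Finset V, IsTIndepSet G t S ∧ S.card = n}

/-- The equidistant number of `G`: `max {eq_t(G) : 1 ≤ t ≤ diam G}`. -/
noncomputable def eqTotalNum {V : Type*} [Fintype V] (G : SimpleGraph V) : ℕ :=
  (Finset.Icc 1 G.diam).sup (eqNum G)

private lemma bddAboveAux {V : Type*} [Fintype V] (P : Finset V → Prop) :
    BddAbove {n : ℕ | ∃ S : Finset V, P S ∧ S.card = n} := by
  refine ⟨Fintype.card V, fun n hn => ?_⟩
  obtain ⟨S, _, rfl⟩ := hn
  exact S.card_le_univ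

/-- For a connected graph `G` on at least 2 vertices:
`ω(G) = eq_1(G) ≤ eq(G) ≤ max {ω(G), α(G)}`, and if `G` has diameter 2 then
`eq(G) = max {ω(G), α(G)}`. Here `α(G) = α_1(G)`. -/
theorem eq_one_eq_cliqueNum_and_eqTotal_le_max {V : Type*} [Fintype V] (G : SimpleGraph V)
    (hG : G.Connected) (hcard : 2 ≤ Fintype.card V) :
    G.cliqueNum = eqNum G 1 ∧ eqNum G 1 ≤ eqTotalNum G ∧
      eqTotalNum G ≤ max G.cliqueNum (indepNumT G 1) ∧
      (G.diam = 2 → eqTotalNum G = max G.cliqueNum (indepNumT G 1)) := by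
  haveI : Nonempty V := Fintype.card_pos_iff.mp (by omega)
  haveI hnt : Nontrivial V := Fintype.one_lt_card_iff_nontrivial.mp (by omega)
  have hetop : G.ediam ≠ ⊤ := by
    obtain ⟨u, v, huv⟩ := G.exists_edist_eq_ediam_of_finite
    rw [← huv]
    exact edist_ne_top_iff_reachable.mpr (hG u v)
  have hdiam : G.diam ≠ 0 := by
    intro h
    rcases diam_eq_zero.mp h with h | h
    · exact hetop h
    · exact not_subsingleton V h
  -- clique number = eqNum 1
  have h1 : G.cliqueNum = eqNum G 1 := by
    unfold eqNum SimpleGraph.cliqueNum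
    congr 1
    ext n
    constructor
    · rintro ⟨s, hs, rfl⟩
      exact ⟨s, fun u hu v hv huv => dist_eq_one_iff_adj.mpr (hs hu hv huv), rfl⟩
    · rintro ⟨s, hs, rfl⟩
      exact ⟨s, ⟨fun u hu v hv huv => dist_eq_one_iff_adj.mp (hs hu hv huv), rfl⟩⟩
  have h2 : eqNum G 1 ≤ eqTotalNum G := by
    apply Finset.le_sup (f := eqNum G)
    simp only [Finset.mem_Icc]
    omega
  have h3 : eqTotalNum G ≤ max G.cliqueNum (indepNumT G 1) := by
    apply Finset.sup_le
    intro t ht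
    simp only [Finset.mem_Icc] at ht
    rcases eq_or_lt_of_le ht.1 with h | h
    · rw [← h, ← h1]
      exact le_max_left _ _
    · refine le_trans ?_ (le_max_right _ _)
      have hne : {n : ℕ | ∃ S : Finset V, IsEquidistantSet G t S ∧ S.card = n}.Nonempty :=
        ⟨0, ∅, by simp [IsEquidistantSet], by simp⟩
      apply csSup_le hne
      rintro n ⟨S, hS, rfl⟩
      apply le_csSup (bddAboveAux _)
      refine ⟨S, fun u hu v hv huv => ?_, rfl⟩
      have := hS hu hv huv
      omega
  refine ⟨h1, h2, h3, fun hd2 => ?_⟩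
  refine le_antisymm h3 (max_le (h1 ▸ h2) ?_)
  have h2mem : 2 ∈ Finset.Icc 1 G.diam := by simp [hd2]
  refine le_trans ?_ (Finset.le_sup (f := eqNum G) h2mem)
  have hne : {n : ℕ | ∃ S : Finset V, IsTIndepSet G 1 S ∧ S.card = n}.Nonempty :=
    ⟨0, ∅, by simp [IsTIndepSet], by simp⟩
  apply csSup_le hne
  rintro n ⟨S, hS, rfl⟩
  apply le_csSup (bddAboveAux _)
  refine ⟨S, fun u hu v hv huv => ?_, rfl⟩
  have hle : G.dist u v ≤ 2 := hd2 ▸ dist_le_diam hetop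
  have := hS hu hv huv
  omega
end

section
/- Fix an integer t ≥ 2. For each integer k ≥ 1 define AE(k,t) = max{α_{t−1}(G) − eq_t(G) : G a connected finite simple graph with exactly k vertices} and M(k) = max{α_{t−1}(G) : G a connected finite simple graph with exactly k vertices}. Then there exists a real number L such that AE(k,t)/k → L and M(k)/k → L as k → ∞. -/
open SimpleGraph

/-!
Let `ℓ = ⌈t/2⌉`; both ratios tend to `1/ℓ`.

Upper bound: in a connected graph, the balls of radius `ℓ - 1` around the points of a
`(t-1)`-independent set with at least two points are disjoint, and each contains `ℓ` vertices of
a shortest path to another point; hence `α_{t-1}(G) ≤ k/ℓ + 1`.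

Lower bound: in the caterpillar whose first `s` spine vertices each carry `s` legs of `ℓ`
vertices, the `s²` leaves are pairwise at distance `2ℓ ≥ t`. In a `t`-equidistant set the
points at depth `t/2` hang at a single spine vertex, on distinct legs, and among any three points
the middle one along the spine is at depth `t/2`; so the set has at most `s + 2` points. Taking
`s ≈ √(k/ℓ)` gives `α_{t-1} - eq_t ≥ k/ℓ - O(√k)`.
-/

open Finset Filter Topology

section Cardinality
variable {V : Type*} [Fintype V]

lemma bddAbove_card_setOf (P : Finset V → Prop) :
    BddAbove {m : ℕ | ∃ S : Finset V, P S ∧ #S = m} :=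
  ⟨Fintype.card V, fun _ ⟨S, _, hS⟩ => hS ▸ card_le_univ S⟩

lemma exists_card_eq_sSup {P : Finset V → Prop} (h : P ∅) :
    ∃ S : Finset V, P S ∧ #S = sSup {m : ℕ | ∃ S : Finset V, P S ∧ #S = m} :=
  Nat.sSup_mem (s := {m : ℕ | ∃ S : Finset V, P S ∧ #S = m}) ⟨0, ∅, h, card_empty⟩
    (bddAbove_card_setOf P)

variable (G : SimpleGraph V)

lemma exists_isTIndepSet_card_eq (r : ℕ) : ∃ S, IsTIndepSet G r S ∧ #S = indepNumT G r :=
  exists_card_eq_sSup (by simp [IsTIndepSet])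

lemma exists_isEquidistantSet_card_eq (t : ℕ) :
    ∃ S, IsEquidistantSet G t S ∧ #S = eqNum G t :=
  exists_card_eq_sSup (by simp [IsEquidistantSet])

lemma le_indepNumT {r : ℕ} {S : Finset V} (hS : IsTIndepSet G r S) : #S ≤ indepNumT G r :=
  le_csSup (bddAbove_card_setOf _) ⟨S, hS, rfl⟩

lemma indepNumT_le_card (r : ℕ) : indepNumT G r ≤ Fintype.card V := by
  obtain ⟨S, -, hS⟩ := exists_isTIndepSet_card_eq G r
  exact hS ▸ card_le_univ S

end Cardinality

lemma sSup_card_setOf_congr {V V' : Type*} {P : Finset V → Prop} {Q : Finset V' → Prop}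
    (e : V ≃ V') (h : ∀ S, Q (S.map e.toEmbedding) ↔ P S) :
    sSup {m : ℕ | ∃ S, Q S ∧ #S = m} = sSup {m : ℕ | ∃ S, P S ∧ #S = m} := by
  congr 1
  ext m
  constructor
  · rintro ⟨S, hS, rfl⟩
    refine ⟨S.map e.symm.toEmbedding, (h _).1 ?_, card_map _⟩
    simpa [Finset.map_map] using hS
  · rintro ⟨S, hS, rfl⟩
    exact ⟨S.map e.toEmbedding, (h S).2 hS, card_map _⟩

namespace SimpleGraph

section Iso
variable {V V' : Type*} {G : SimpleGraph V} {G' : SimpleGraph V'}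

lemma Hom.edist_map_le (f : G →g G') (u v : V) : G'.edist (f u) (f v) ≤ G.edist u v := by
  by_cases hr : G.Reachable u v
  · obtain ⟨p, hp⟩ := hr.exists_walk_length_eq_edist
    exact hp ▸ (edist_le (p.map f)).trans_eq (by simp)
  · exact (edist_eq_top_of_not_reachable hr).symm ▸ le_top

lemma Iso.edist_map (φ : G ≃g G') (u v : V) : G'.edist (φ u) (φ v) = G.edist u v :=
  le_antisymm (Hom.edist_map_le φ.toHom u v)
    (by simpa using Hom.edist_map_le φ.symm.toHom (φ u) (φ v))

lemma Iso.dist_map (φ : G ≃g G') (u v : V) : G'.dist (φ u) (φ v) = G.dist u v :=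
  congrArg ENat.toNat (φ.edist_map u v)

lemma Iso.isTIndepSet_map_iff (φ : G ≃g G') {r : ℕ} {S : Finset V} :
    IsTIndepSet G' r (S.map φ.toEquiv.toEmbedding) ↔ IsTIndepSet G r S := by
  simp [IsTIndepSet, Set.Pairwise, φ.dist_map]

lemma Iso.isEquidistantSet_map_iff (φ : G ≃g G') {t : ℕ} {S : Finset V} :
    IsEquidistantSet G' t (S.map φ.toEquiv.toEmbedding) ↔ IsEquidistantSet G t S := by
  simp [IsEquidistantSet, Set.Pairwise, φ.dist_map]

variable [Fintype V] [Fintype V']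

lemma Iso.indepNumT_eq (φ : G ≃g G') (r : ℕ) : indepNumT G' r = indepNumT G r :=
  sSup_card_setOf_congr φ.toEquiv fun _ => φ.isTIndepSet_map_iff

lemma Iso.eqNum_eq (φ : G ≃g G') (t : ℕ) : eqNum G' t = eqNum G t :=
  sSup_card_setOf_congr φ.toEquiv fun _ => φ.isEquidistantSet_map_iff

end Iso

variable {V : Type*} {G : SimpleGraph V}

lemma Walk.apply_le_apply_add_length {f : V → ℕ} (hf : ∀ a b, G.Adj a b → f b ≤ f a + 1)
    {x y : V} (p : G.Walk x y) : f y ≤ f x + p.length := by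
  induction p with
  | nil => simp
  | cons h p ih => have := hf _ _ h; simp only [Walk.length_cons]; omega

lemma exists_walk_length_le_of_exists_adj_lt {D : V → V → ℕ}
    (hstep : ∀ x y, x ≠ y → ∃ y', G.Adj y' y ∧ D x y' < D x y) (x y : V) :
    ∃ p : G.Walk x y, p.length ≤ D x y := by
  induction hd : D x y using Nat.strong_induction_on generalizing y with
  | _ d ih =>
    by_cases hxy : x = y
    · subst hxy
      exact ⟨.nil, by simp⟩
    · obtain ⟨y', hadj, hlt⟩ := hstep x y hxy
      obtain ⟨p, hp⟩ := ih _ (hd ▸ hlt) y' rfl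
      exact ⟨p.concat hadj, by simp only [Walk.length_concat]; omega⟩

lemma dist_eq_of_exists_adj_lt {D : V → V → ℕ} (hself : ∀ x, D x x = 0)
    (htri : ∀ x y z, D x z ≤ D x y + D y z) (hadj : ∀ x y, G.Adj x y → D x y ≤ 1)
    (hstep : ∀ x y, x ≠ y → ∃ y', G.Adj y' y ∧ D x y' < D x y) (x y : V) :
    G.dist x y = D x y := by
  obtain ⟨p, hp⟩ := exists_walk_length_le_of_exists_adj_lt hstep x y
  refine le_antisymm ((dist_le p).trans hp) ?_
  obtain ⟨q, hq⟩ := p.reachable.exists_walk_length_eq_dist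
  have := q.apply_le_apply_add_length (f := D x) fun a b hab =>
    (htri x a b).trans (Nat.add_le_add_left (hadj a b hab) _)
  rw [hself] at this
  omega

variable [Fintype V]

lemma le_card_filter_dist_le {v w : V} (hvw : G.Reachable v w) {ρ : ℕ}
    (hρ : ρ ≤ G.dist v w) :
    ρ + 1 ≤ #{u | G.dist v u ≤ ρ} := by
  classical
  obtain ⟨p, hp, hlen⟩ := hvw.exists_path_of_dist
  calc ρ + 1 = #((range (ρ + 1)).image p.getVert) := by
        rw [card_image_of_injOn fun i hi j hj h => hp.getVert_injOn
          (by simp at hi ⊢; omega) (by simp at hj ⊢; omega) h, card_range]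
    _ ≤ #{u | G.dist v u ≤ ρ} := card_le_card fun u hu => by
        obtain ⟨i, hi, rfl⟩ := mem_image.1 hu
        simp only [mem_filter, mem_univ, true_and]
        exact (dist_le (p.take i)).trans (by simp at hi; simp [Walk.take_length]; omega)

lemma card_mul_le_card_of_isTIndepSet (hG : G.Connected) {ρ r : ℕ} (hρ : 2 * ρ ≤ r)
    {S : Finset V} (hS : IsTIndepSet G r S) (hS₂ : 1 < #S) :
    #S * (ρ + 1) ≤ Fintype.card V := by
  classical
  let ball (v : V) : Finset V := {u | G.dist v u ≤ ρ}
  have hdisj : (S : Set V).PairwiseDisjoint ball := by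
    intro v hv v' hv' hne
    refine Finset.disjoint_left.2 fun u hu hu' => ?_
    have := hS hv hv' hne
    have := hG.dist_triangle (u := v) (v := u) (w := v')
    simp only [ball, mem_filter, mem_univ, true_and] at hu hu'
    rw [dist_comm] at hu'
    omega
  have hball : ∀ v ∈ S, ρ + 1 ≤ #(ball v) := fun v hv => by
    obtain ⟨w, hw, hwv⟩ := exists_mem_ne hS₂ v
    exact le_card_filter_dist_le (hG v w) (by have := hS hv hw hwv.symm; omega)
  calc #S * (ρ + 1) ≤ ∑ v ∈ S, #(ball v) := by
        rw [← smul_eq_mul, ← sum_const]; exact sum_le_sum hball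
    _ = #(S.biUnion ball) := (card_biUnion hdisj).symm
    _ ≤ Fintype.card V := card_le_univ _

lemma indepNumT_mul_le (hG : G.Connected) {ρ r : ℕ} (hρ : 2 * ρ ≤ r) :
    indepNumT G r * (ρ + 1) ≤ Fintype.card V + (ρ + 1) := by
  obtain ⟨S, hS, hcard⟩ := exists_isTIndepSet_card_eq G r
  rw [← hcard]
  rcases le_or_gt #S 1 with h | h
  · exact (Nat.mul_le_mul_right _ h).trans (by omega)
  · exact (card_mul_le_card_of_isTIndepSet hG hρ hS h).trans (Nat.le_add_right _ _)

end SimpleGraph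

lemma card_filter_two_mul_ne_le_two {ι : Type*} {S : Finset ι} {d i : ι → ℕ} {t : ℕ}
    (h : ∀ x ∈ S, ∀ y ∈ S, x ≠ y → d x + d y + Nat.dist (i x) (i y) = t) :
    #{x ∈ S | 2 * d x ≠ t} ≤ 2 := by
  by_contra! hT
  obtain ⟨x, hx, y, hy, z, hz, hxy, hxz, hyz⟩ := two_lt_card.1 hT
  simp only [mem_filter] at hx hy hz
  have := h x hx.1 y hy.1 hxy
  have := h x hx.1 z hz.1 hxz
  have := h y hy.1 z hz.1 hyz
  -- of three such points, the middle one in the order of `i` has `2 * d = t`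
  simp only [Nat.dist] at *
  omega

/-- Spine vertices `Fin n`, and leg vertices `(c, a, j)`: the vertex at depth `j + 1` on the
`a`-th leg hanging from spine vertex `c < s`. -/
abbrev CaterpillarVert (s n ℓ : ℕ) := Fin n ⊕ (Fin s × Fin s × Fin ℓ)

namespace Caterpillar
variable {s n ℓ : ℕ}

def metric : CaterpillarVert s n ℓ → CaterpillarVert s n ℓ → ℕ
  | .inl i, .inl i' => Nat.dist i i'
  | .inl i, .inr (c, _, j) => j + 1 + Nat.dist i c
  | .inr (c, _, j), .inl i => j + 1 + Nat.dist c i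
  | .inr (c, a, j), .inr (c', a', j') =>
      if c = c' ∧ a = a' then Nat.dist j j' else j + 1 + (j' + 1) + Nat.dist c c'

lemma metric_self (x : CaterpillarVert s n ℓ) : metric x x = 0 := by
  rcases x with i | ⟨c, a, j⟩ <;> simp [metric]

lemma metric_comm (x y : CaterpillarVert s n ℓ) : metric x y = metric y x := by
  rcases x with i | ⟨c, a, j⟩ <;> rcases y with i' | ⟨c', a', j'⟩ <;>
    simp only [metric, Nat.dist, Fin.ext_iff] <;> (try split_ifs) <;> omega

lemma metric_triangle (x y z : CaterpillarVert s n ℓ) :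
    metric x z ≤ metric x y + metric y z := by
  rcases x with i | ⟨c, a, j⟩ <;> rcases y with i' | ⟨c', a', j'⟩ <;>
    rcases z with i'' | ⟨c'', a'', j''⟩ <;>
    simp only [metric, Nat.dist, Fin.ext_iff] <;> (try split_ifs) <;> omega

def idx : CaterpillarVert s n ℓ → ℕ
  | .inl i => i
  | .inr (c, _, _) => c

def depth : CaterpillarVert s n ℓ → ℕ
  | .inl _ => 0
  | .inr (_, _, j) => j + 1

lemma idx_lt (hsn : s ≤ n) (x : CaterpillarVert s n ℓ) : idx x < n := by
  rcases x with i | ⟨c, a, j⟩ <;> simp only [idx] <;> omega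

lemma metric_inl (x : CaterpillarVert s n ℓ) (i : Fin n) :
    metric x (.inl i) = depth x + Nat.dist (idx x) i := by
  rcases x with i' | ⟨c, a, j⟩ <;> simp [metric, depth, idx]

lemma metric_eq_or_lt (x y : CaterpillarVert s n ℓ) :
    metric x y = depth x + depth y + Nat.dist (idx x) (idx y) ∨ metric x y < ℓ := by
  rcases x with i | ⟨c, a, j⟩ <;> rcases y with i' | ⟨c', a', j'⟩ <;>
    simp only [metric, depth, idx, Nat.dist, true_or] <;> (try split_ifs) <;> omega

lemma exists_adj_metric_lt (hsn : s ≤ n) {x y : CaterpillarVert s n ℓ} (hxy : x ≠ y) :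
    ∃ y', metric y' y = 1 ∧ metric x y' < metric x y := by
  rcases y with i | ⟨c, a, j⟩
  · have hx := idx_lt hsn x
    rcases lt_trichotomy (idx x) i with h | h | h
    · refine ⟨.inl ⟨i - 1, by omega⟩, ?_, ?_⟩
      · simp [metric, Nat.dist]; omega
      · simp only [metric_inl, Nat.dist]; omega
    · rcases x with i' | ⟨c, a, j⟩
      · exact absurd (congrArg Sum.inl (Fin.ext h)) hxy
      · refine ⟨.inr (c, a, ⟨0, j.pos⟩), ?_, ?_⟩ <;> simp_all [metric, idx, Nat.dist]
    · refine ⟨.inl ⟨i + 1, by omega⟩, ?_, ?_⟩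
      · simp [metric, Nat.dist]
      · simp only [metric_inl, Nat.dist]; omega
  · by_cases hleg : ∃ j', x = .inr (c, a, j')
    · obtain ⟨j', rfl⟩ := hleg
      have hj : (j : ℕ) ≠ j' := fun h => hxy (by rw [Fin.ext h])
      rcases Nat.lt_or_gt_of_ne hj with h | h
      · refine ⟨.inr (c, a, ⟨j + 1, by omega⟩), by simp [metric, Nat.dist], ?_⟩
        simp [metric, Nat.dist]; omega
      · refine ⟨.inr (c, a, ⟨j - 1, by omega⟩), ?_, ?_⟩ <;>
          simp [metric, Nat.dist] <;> omega
    · have hspine : ∀ j',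
          metric x (.inr (c, a, j')) = j' + 1 + metric x (.inl ⟨c, by omega⟩) := by
        intro j'
        rcases x with i' | ⟨c', a', j''⟩
        · simp [metric, Nat.dist]
        · have : ¬(c' = c ∧ a' = a) := by rintro ⟨rfl, rfl⟩; exact hleg ⟨j'', rfl⟩
          simp [metric, Nat.dist, this]; omega
      rcases Nat.eq_zero_or_pos (j : ℕ) with h | h
      · refine ⟨.inl ⟨c, by omega⟩, ?_, ?_⟩
        · simp [metric, Nat.dist]; omega
        · rw [hspine]; omega
      · refine ⟨.inr (c, a, ⟨j - 1, by omega⟩), ?_, ?_⟩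
        · simp [metric, Nat.dist]; omega
        · rw [hspine, hspine]; simp; omega

lemma card_le_of_forall_idx_depth_eq {T : Finset (CaterpillarVert s n ℓ)} {m d : ℕ} (hd : 0 < d)
    (h : ∀ x ∈ T, idx x = m ∧ depth x = d) : #T ≤ s := by
  let legIndex : CaterpillarVert s n ℓ → ℕ := Sum.elim (fun _ => 0) fun v => v.2.1
  calc #T ≤ #(range s) := card_le_card_of_injOn legIndex ?_ ?_
    _ = s := card_range s
  all_goals intro x hx
  · rcases x with i | ⟨c, a, j⟩
    · simp only [depth, (h _ hx).2.symm] at hd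
      omega
    · simp [legIndex]
  · intro y hy hxy
    obtain ⟨hxm, hxd⟩ := h x hx
    obtain ⟨hym, hyd⟩ := h y hy
    rcases x with i | ⟨c, a, j⟩ <;> rcases y with i' | ⟨c', a', j'⟩ <;>
      simp_all [depth, idx, legIndex, Fin.ext_iff]
    omega

end Caterpillar

open Caterpillar

section CaterpillarGraph

def caterpillar (s n ℓ : ℕ) : SimpleGraph (CaterpillarVert s n ℓ) where
  Adj x y := metric x y = 1
  symm := ⟨fun x y h => show metric y x = 1 from (metric_comm y x).trans h⟩
  loopless := ⟨fun x h => by simp [metric_self] at h⟩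

variable {s n ℓ : ℕ}

lemma caterpillar_dist (hsn : s ≤ n) (x y : CaterpillarVert s n ℓ) :
    (caterpillar s n ℓ).dist x y = metric x y :=
  dist_eq_of_exists_adj_lt (G := caterpillar s n ℓ) metric_self metric_triangle
    (fun _ _ h => h.le) (fun _ _ hxy => exists_adj_metric_lt hsn hxy) x y

lemma caterpillar_connected (hsn : s ≤ n) (hn : 0 < n) : (caterpillar s n ℓ).Connected where
  preconnected x y := (exists_walk_length_le_of_exists_adj_lt
    (fun _ _ hxy => exists_adj_metric_lt hsn hxy) x y).elim fun p _ => p.reachable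
  nonempty := ⟨.inl ⟨0, hn⟩⟩

lemma le_indepNumT_caterpillar (hsn : s ≤ n) {r : ℕ} (hr : r < 2 * ℓ) :
    s * s ≤ indepNumT (caterpillar s n ℓ) r := by
  rcases Nat.eq_zero_or_pos ℓ with rfl | hℓ
  · omega
  let leaf : Fin s × Fin s ↪ CaterpillarVert s n ℓ :=
    ⟨fun p => .inr (p.1, p.2, ⟨ℓ - 1, by omega⟩),
      fun p q h => by simpa [Prod.ext_iff] using h⟩
  have hleaves : IsTIndepSet (caterpillar s n ℓ) r (univ.map leaf) := by
    simp only [IsTIndepSet, Set.Pairwise, coe_map, coe_univ, Set.image_univ, Set.mem_range]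
    rintro _ ⟨p, rfl⟩ _ ⟨q, rfl⟩ hpq
    have : ¬ (p.1 = q.1 ∧ p.2 = q.2) := fun h => hpq (by rw [Prod.ext h.1 h.2])
    show r < (caterpillar s n ℓ).dist (.inr (p.1, p.2, _)) (.inr (q.1, q.2, _))
    rw [caterpillar_dist hsn]
    simp only [metric, if_neg this]
    omega
  simpa using le_indepNumT _ hleaves

lemma eqNum_caterpillar_le (hsn : s ≤ n) {t : ℕ} (ht : 0 < t) (hℓt : ℓ ≤ t) :
    eqNum (caterpillar s n ℓ) t ≤ s + 2 := by
  classical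
  obtain ⟨S, hS, hcard⟩ := exists_isEquidistantSet_card_eq (caterpillar s n ℓ) t
  have hE : ∀ x ∈ S, ∀ y ∈ S, x ≠ y →
      depth x + depth y + Nat.dist (idx x) (idx y) = t :=
    fun x hx y hy hxy => by
      have hd : metric x y = t := caterpillar_dist hsn x y ▸ hS hx hy hxy
      exact hd ▸ ((metric_eq_or_lt x y).resolve_right (by omega)).symm
  have hmid : #{x ∈ S | 2 * depth x = t} ≤ s := by
    rcases eq_empty_or_nonempty {x ∈ S | 2 * depth x = t} with h | ⟨x₀, hx₀⟩
    · simp [h]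
    · simp only [mem_filter] at hx₀
      refine card_le_of_forall_idx_depth_eq (m := idx x₀) (d := depth x₀) (by omega)
        fun y hy => ?_
      simp only [mem_filter] at hy
      by_cases hyx : y = x₀
      · exact ⟨by rw [hyx], by rw [hyx]⟩
      · have := hE y hy.1 x₀ hx₀.1 hyx
        simp only [Nat.dist] at this
        omega
  calc eqNum (caterpillar s n ℓ) t
        = #{x ∈ S | 2 * depth x = t} + #{x ∈ S | ¬2 * depth x = t} := by
          rw [card_filter_add_card_filter_not, hcard]
    _ ≤ s + 2 := add_le_add hmid (card_filter_two_mul_ne_le_two hE)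

end CaterpillarGraph

/-- `M(k)` for `r = t - 1`. -/
noncomputable def maxIndepNumT (r k : ℕ) : ℕ :=
  sSup {m : ℕ | ∃ G : SimpleGraph (Fin k), G.Connected ∧ m = indepNumT G r}

/-- `AE(k, t)`. -/
noncomputable def maxIndepNumTSubEqNum (t k : ℕ) : ℤ :=
  sSup {m : ℤ | ∃ G : SimpleGraph (Fin k), G.Connected ∧
    m = (indepNumT G (t - 1) : ℤ) - (eqNum G t : ℤ)}

section Extremal
variable {k : ℕ}

lemma maxIndepNumT_mul_le {ρ r : ℕ} (hρ : 2 * ρ ≤ r) :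
    maxIndepNumT r k * (ρ + 1) ≤ k + (ρ + 1) := by
  rw [← Nat.le_div_iff_mul_le ρ.succ_pos]
  refine csSup_le' ?_
  rintro _ ⟨G, hG, rfl⟩
  rw [Nat.le_div_iff_mul_le ρ.succ_pos]
  simpa using indepNumT_mul_le hG hρ

lemma le_maxIndepNumT {G : SimpleGraph (Fin k)} (hG : G.Connected) (r : ℕ) :
    indepNumT G r ≤ maxIndepNumT r k :=
  le_csSup ⟨k, by rintro _ ⟨G, -, rfl⟩; simpa using indepNumT_le_card G r⟩ ⟨G, hG, rfl⟩

lemma le_maxIndepNumTSubEqNum {G : SimpleGraph (Fin k)} (hG : G.Connected) (t : ℕ) :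
    (indepNumT G (t - 1) : ℤ) - eqNum G t ≤ maxIndepNumTSubEqNum t k := by
  refine le_csSup ⟨k, ?_⟩ ⟨G, hG, rfl⟩
  rintro _ ⟨G, -, rfl⟩
  have := indepNumT_le_card G (t - 1)
  simp only [Fintype.card_fin] at this
  omega

lemma maxIndepNumTSubEqNum_le [NeZero k] (t : ℕ) :
    maxIndepNumTSubEqNum t k ≤ maxIndepNumT (t - 1) k := by
  refine csSup_le ⟨_, ⊤, connected_top, rfl⟩ ?_
  rintro _ ⟨G, hG, rfl⟩
  have := le_maxIndepNumT hG (t - 1)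
  omega

lemma sq_sub_le_maxIndepNumTSubEqNum {s ℓ t : ℕ} (hs : 0 < s) (hℓ : 0 < ℓ)
    (hℓt : ℓ ≤ t) (htℓ : t ≤ 2 * ℓ) (hk : s * s * ℓ + s ≤ k) :
    (s * s : ℤ) - (s + 2) ≤ maxIndepNumTSubEqNum t k := by
  set n := k - s * s * ℓ
  have hsn : s ≤ n := by omega
  have hcard : Fintype.card (CaterpillarVert s n ℓ) = k := by
    simp only [Fintype.card_sum, Fintype.card_prod, Fintype.card_fin, ← mul_assoc]
    omega
  let φ := (caterpillar s n ℓ).overFinIso hcard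
  have hG := φ.connected_iff.1 (caterpillar_connected hsn (by omega))
  refine le_trans ?_ (le_maxIndepNumTSubEqNum hG t)
  rw [φ.indepNumT_eq, φ.eqNum_eq]
  have := le_indepNumT_caterpillar (n := n) (ℓ := ℓ) hsn (r := t - 1) (by omega)
  have := eqNum_caterpillar_le (n := n) (ℓ := ℓ) hsn (by omega) hℓt
  omega

end Extremal

lemma exists_sq_mul_le_lt {ℓ k : ℕ} (hℓ : 0 < ℓ) (hk : 4 * ℓ ≤ k) :
    ∃ s, 0 < s ∧ (s + 1) ^ 2 * ℓ ≤ k ∧ k < (s + 2) ^ 2 * ℓ := by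
  set m := Nat.sqrt (k / ℓ)
  have hm : 2 ≤ m := Nat.le_sqrt.2 ((Nat.le_div_iff_mul_le hℓ).2 (by omega))
  refine ⟨m - 1, by omega, ?_, ?_⟩
  · rw [show m - 1 + 1 = m by omega, ← Nat.le_div_iff_mul_le hℓ, sq]
    exact Nat.sqrt_le _
  · rw [show m - 1 + 2 = m + 1 by omega, ← Nat.div_lt_iff_lt_mul hℓ]
    exact Nat.sqrt_lt'.1 (Nat.lt_succ_self m)

lemma tendsto_div_of_abs_mul_sub_le {a : ℕ → ℝ} {c C : ℝ} (hc : c ≠ 0)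
    (h : ∀ᶠ k in atTop, |a k * c - k| ≤ C * √k) :
    Tendsto (fun k => a k / k) atTop (𝓝 c⁻¹) := by
  have herr : Tendsto (fun k : ℕ => (a k * c - k) / k) atTop (𝓝 0) := by
    refine squeeze_zero_norm' ?_ ((tendsto_const_nhds (x := C)).div_atTop
      (Real.tendsto_sqrt_atTop.comp tendsto_natCast_atTop_atTop))
    filter_upwards [h, eventually_gt_atTop 0] with k hk hk₀
    have hs : 0 < √(k : ℝ) := Real.sqrt_pos.2 (by exact_mod_cast hk₀)
    rw [norm_div, Real.norm_eq_abs, Real.norm_natCast, Function.comp_apply,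
      div_le_div_iff₀ (by exact_mod_cast hk₀) hs]
    calc |a k * c - k| * √(k : ℝ) ≤ C * √(k : ℝ) * √(k : ℝ) :=
          mul_le_mul_of_nonneg_right hk hs.le
      _ = C * k := by rw [mul_assoc, Real.mul_self_sqrt (Nat.cast_nonneg _)]
  have hlim : Tendsto (fun k : ℕ => c⁻¹ * (1 + (a k * c - k) / k)) atTop (𝓝 c⁻¹) := by
    simpa using ((tendsto_const_nhds (x := (1 : ℝ))).add herr).const_mul c⁻¹
  refine hlim.congr' ?_
  filter_upwards [eventually_gt_atTop 0] with k hk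
  field_simp
  ring

lemma abs_maxIndepNumT_mul_sub_le {t ℓ k : ℕ} (ht : 0 < t) (htℓ : t ≤ 2 * ℓ)
    (hℓt : 2 * ℓ ≤ t + 1) (hk : 4 * ℓ ≤ k) :
    |(maxIndepNumTSubEqNum t k : ℝ) * ℓ - k| ≤ 6 * ℓ * √k ∧
      |(maxIndepNumT (t - 1) k : ℝ) * ℓ - k| ≤ 6 * ℓ * √k := by
  have hℓ : 0 < ℓ := by omega
  have : NeZero k := ⟨by omega⟩
  obtain ⟨s, hs, hlow, hhigh⟩ := exists_sq_mul_le_lt hℓ hk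
  have hA := sq_sub_le_maxIndepNumTSubEqNum hs hℓ (by omega) htℓ (k := k) (by nlinarith)
  have hAM := maxIndepNumTSubEqNum_le (k := k) t
  have hM := maxIndepNumT_mul_le (k := k) (ρ := ℓ - 1) (r := t - 1) (by omega)
  rw [Nat.sub_add_cancel hℓ] at hM
  have hsqrt : (s + 1 : ℝ) ≤ √k :=
    Real.le_sqrt_of_sq_le (by exact_mod_cast (Nat.le_mul_of_pos_right _ hℓ).trans hlow)
  have hA' : ((s * s : ℕ) : ℝ) - (s + 2) ≤ maxIndepNumTSubEqNum t k := by exact_mod_cast hA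
  have hAM' : (maxIndepNumTSubEqNum t k : ℝ) ≤ maxIndepNumT (t - 1) k := by exact_mod_cast hAM
  have hM' : (maxIndepNumT (t - 1) k : ℝ) * ℓ ≤ k + ℓ := by exact_mod_cast hM
  have hhigh' : (k : ℝ) < (s + 2) ^ 2 * ℓ := by exact_mod_cast hhigh
  have hℓ' : (0 : ℝ) < ℓ := by exact_mod_cast hℓ
  push_cast at hA'
  have hlower : (k : ℝ) - 6 * ℓ * √k ≤ maxIndepNumTSubEqNum t k * ℓ := by
    nlinarith [mul_le_mul_of_nonneg_right hA' hℓ'.le, mul_le_mul_of_nonneg_left hsqrt hℓ'.le]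
  have hupper : (maxIndepNumT (t - 1) k : ℝ) * ℓ ≤ k + 6 * ℓ * √k := by
    nlinarith [mul_le_mul_of_nonneg_left hsqrt hℓ'.le]
  have hmid : (maxIndepNumTSubEqNum t k : ℝ) * ℓ ≤ maxIndepNumT (t - 1) k * ℓ :=
    mul_le_mul_of_nonneg_right hAM' hℓ'.le
  constructor <;> rw [abs_le] <;> constructor <;> linarith

/-- Fix `t ≥ 2`. With `AE(k,t)` the maximum of `α_{t-1}(G) - eq_t(G)` over
connected graphs `G` on `k` vertices and `M(k)` the maximum of `α_{t-1}(G)` over connected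
graphs on `k` vertices, there is a real `L` with `AE(k,t)/k → L` and `M(k)/k → L`. -/
theorem AE_div_tendsto_iff_max_indep_div_tendsto (t : ℕ) (ht : 2 ≤ t) :
    ∃ L : ℝ,
      Filter.Tendsto (fun k : ℕ =>
        ((sSup {m : ℤ | ∃ G : SimpleGraph (Fin k), G.Connected ∧
            m = (indepNumT G (t - 1) : ℤ) - (eqNum G t : ℤ)} : ℤ) : ℝ) / (k : ℝ))
        Filter.atTop (nhds L) ∧
      Filter.Tendsto (fun k : ℕ =>
        ((sSup {m : ℕ | ∃ G : SimpleGraph (Fin k), G.Connected ∧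
            m = indepNumT G (t - 1)} : ℕ) : ℝ) / (k : ℝ))
        Filter.atTop (nhds L) := by
  set ℓ := (t + 1) / 2
  have hbounds : ∀ᶠ k in atTop,
      |(maxIndepNumTSubEqNum t k : ℝ) * ℓ - k| ≤ 6 * ℓ * √k ∧
        |(maxIndepNumT (t - 1) k : ℝ) * ℓ - k| ≤ 6 * ℓ * √k :=
    eventually_atTop.2 ⟨4 * ℓ, fun k hk =>
      abs_maxIndepNumT_mul_sub_le (by omega) (by omega) (by omega) hk⟩
  have hℓ : (ℓ : ℝ) ≠ 0 := by norm_cast; omega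
  exact ⟨(ℓ : ℝ)⁻¹, tendsto_div_of_abs_mul_sub_le hℓ (hbounds.mono fun _ => And.left),
    tendsto_div_of_abs_mul_sub_le hℓ (hbounds.mono fun _ => And.right)⟩
end

section
/- Let G be a connected finite simple graph on n vertices with adjacency matrix A and adjacency eigenvalues λ_1 ≥ λ_2 ≥ ... ≥ λ_n. Let t ≥ 1 be an integer and let p be a real polynomial of degree at most t, with W(p) = max_{u ∈ V(G)} (p(A))_{uu} and w(p) = min_{u ∈ V(G)} (p(A))_{uu}. Then eq_{t+1}(G) ≤ min{ |{i ∈ {1,...,n} : p(λ_i) ≥ w(p)}| , |{i ∈ {1,...,n} : p(λ_i) ≤ W(p)}| }, where eigenvalues are counted with multiplicity. -/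
open SimpleGraph

/-! Let `S` be a `(t+1)`-equidistant set and `M = p(A)`. No walk of length `≤ deg p ≤ t` joins two
vertices of `S`, so the principal submatrix of `M` on `S` is diagonal with entries `≥ w`, and the
quadratic form of `M` is `≥ w‖x‖²` on the `|S|`-dimensional space of vectors supported on `S`. In an
orthonormal eigenbasis of `A` the form of `M` has weights `p(λ_j)`, so it is `< w‖x‖²` on every
nonzero vector orthogonal to the eigenvectors with `p(λ_j) ≥ w`. Hence no nonzero vector supported
on `S` is orthogonal to all those eigenvectors, which forces `|S| ≤ #{j : p(λ_j) ≥ w}`. The bound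
with `W` is the same argument applied to `-M`. -/

open Finset Matrix Polynomial RealInnerProductSpace

section Spectral

variable {E ι κ : Type*} [NormedAddCommGroup E] [InnerProductSpace ℝ E] [Fintype ι] [Fintype κ]
  {f : Module.End ℝ E} {b : OrthonormalBasis ι ℝ E} {μ : ι → ℝ}

theorem OrthonormalBasis.inner_self_apply_eq_sum (hb : ∀ j, f (b j) = μ j • b j) (x : E) :
    ⟪x, f x⟫ = ∑ j, μ j * ⟪b j, x⟫ ^ 2 := by
  have hfx : f x = ∑ j, (μ j * ⟪b j, x⟫) • b j := by
    conv_lhs => rw [← b.sum_repr' x]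
    simp only [map_sum, map_smul, hb, smul_smul, mul_comm]
  rw [hfx, inner_sum]
  exact Finset.sum_congr rfl fun j _ => by rw [inner_smul_right, real_inner_comm]; ring

theorem OrthonormalBasis.eq_zero_of_mul_norm_sq_le_inner (hb : ∀ j, f (b j) = μ j • b j)
    {w : ℝ} {x : E} (hx : ∀ j, w ≤ μ j → ⟪b j, x⟫ = 0) (hle : w * ‖x‖ ^ 2 ≤ ⟪x, f x⟫) :
    x = 0 := by
  have hnorm : ‖x‖ ^ 2 = ∑ j, ⟪b j, x⟫ ^ 2 := by
    rw [← real_inner_self_eq_norm_sq, ← b.sum_inner_mul_inner x x]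
    simp only [real_inner_comm x, sq]
  have hterm : ∀ j, (μ j - w) * ⟪b j, x⟫ ^ 2 ≤ 0 := fun j => by
    rcases le_or_gt w (μ j) with hj | hj
    · simp [hx j hj]
    · exact mul_nonpos_of_nonpos_of_nonneg (by linarith) (sq_nonneg _)
  have hsum : ∑ j, (μ j - w) * ⟪b j, x⟫ ^ 2 = 0 := by
    refine le_antisymm (Finset.sum_nonpos fun j _ => hterm j) ?_
    rw [b.inner_self_apply_eq_sum hb, hnorm, Finset.mul_sum] at hle
    simpa only [sub_mul, Finset.sum_sub_distrib, sub_nonneg, mul_comm w] using hle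
  have hcoord : ∀ j, ⟪b j, x⟫ = 0 := fun j => by
    rcases le_or_gt w (μ j) with hj | hj
    · exact hx j hj
    · have := (Finset.sum_eq_zero_iff_of_nonpos fun j _ => hterm j).mp hsum j (mem_univ j)
      simpa [(sub_neg.mpr hj).ne] using this
  rw [← b.sum_repr' x]
  simp [hcoord]

theorem Orthonormal.mul_norm_sq_le_inner_sum {e : κ → E} (he : Orthonormal ℝ e)
    {w : ℝ} (hoff : Pairwise fun u v => ⟪e u, f (e v)⟫ = 0) (hdiag : ∀ u, w ≤ ⟪e u, f (e u)⟫)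
    (c : κ → ℝ) :
    w * ‖∑ u, c u • e u‖ ^ 2 ≤ ⟪∑ u, c u • e u, f (∑ u, c u • e u)⟫ := by
  have hquad : ⟪∑ u, c u • e u, f (∑ u, c u • e u)⟫ = ∑ u, c u * c u * ⟪e u, f (e u)⟫ := by
    simp only [map_sum, map_smul, sum_inner, inner_sum, real_inner_smul_left,
      real_inner_smul_right]
    refine Finset.sum_congr rfl fun u _ => ?_
    rw [Fintype.sum_eq_single u fun v hv => by rw [hoff hv]; ring]
    ring
  rw [← real_inner_self_eq_norm_sq, he.inner_sum, hquad, Finset.mul_sum]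
  simp only [conj_trivial]
  exact Finset.sum_le_sum fun u _ => by nlinarith [hdiag u, mul_self_nonneg (c u)]

theorem OrthonormalBasis.card_le_card_le_eigenvalues (hb : ∀ j, f (b j) = μ j • b j)
    {e : κ → E} (he : Orthonormal ℝ e) {w : ℝ} (hoff : Pairwise fun u v => ⟪e u, f (e v)⟫ = 0)
    (hdiag : ∀ u, w ≤ ⟪e u, f (e u)⟫) :
    Fintype.card κ ≤ #{j | w ≤ μ j} := by
  let T : Finset ι := {j | w ≤ μ j}
  have hli : LinearIndependent ℝ fun (u : κ) (j : T) => ⟪b j, e u⟫ := by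
    rw [Fintype.linearIndependent_iff]
    intro c hc
    have hx : ∀ j, w ≤ μ j → ⟪b j, ∑ u, c u • e u⟫ = 0 := fun j hj => by
      simpa [inner_sum, inner_smul_right] using congr_fun hc ⟨j, by simpa [T] using hj⟩
    have hzero := b.eq_zero_of_mul_norm_sq_le_inner hb hx (he.mul_norm_sq_le_inner_sum hoff hdiag c)
    exact Fintype.linearIndependent_iff.mp he.linearIndependent c hzero
  simpa using hli.fintype_card_le_finrank

theorem OrthonormalBasis.card_le_card_eigenvalues_le (hb : ∀ j, f (b j) = μ j • b j)
    {e : κ → E} (he : Orthonormal ℝ e) {W : ℝ} (hoff : Pairwise fun u v => ⟪e u, f (e v)⟫ = 0)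
    (hdiag : ∀ u, ⟪e u, f (e u)⟫ ≤ W) :
    Fintype.card κ ≤ #{j | μ j ≤ W} := by
  simpa using b.card_le_card_le_eigenvalues (f := -f) (μ := -μ) (w := -W)
    (fun j => by simp [hb, neg_smul]) he (fun u v huv => by simp [hoff huv])
    (fun u => by simpa using hdiag u)

end Spectral

namespace Matrix.IsHermitian

variable {V : Type*} [Fintype V] [DecidableEq V] {A : Matrix V V ℝ}

theorem toLpLinAlgEquiv_aeval_eigenvectorBasis (hA : A.IsHermitian) (p : ℝ[X]) (j : V) :
    toLpLinAlgEquiv 2 (aeval A p) (hA.eigenvectorBasis j) =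
      p.eval (hA.eigenvalues j) • hA.eigenvectorBasis j := by
  rw [← aeval_algHom_apply]
  refine Module.End.aeval_apply_of_mem_apply_eq_smul (WithLp.ofLp_injective 2 ?_)
  simpa [toLpLinAlgEquiv] using hA.mulVec_eigenvectorBasis j

end Matrix.IsHermitian

theorem Matrix.inner_single_toLpLinAlgEquiv_single {V : Type*} [Fintype V] [DecidableEq V]
    (M : Matrix V V ℝ) (u v : V) :
    ⟪EuclideanSpace.single u 1, toLpLinAlgEquiv 2 M (EuclideanSpace.single v 1)⟫ = M u v := by
  simp [EuclideanSpace.inner_single_left]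

namespace Matrix.IsHermitian

variable {V : Type*} [Fintype V] [DecidableEq V] {A : Matrix V V ℝ}

theorem card_le_card_le_eval_eigenvalues (hA : A.IsHermitian) (p : ℝ[X]) {S : Finset V} {w : ℝ}
    (hoff : (S : Set V).Pairwise fun u v => aeval A p u v = 0)
    (hdiag : ∀ u ∈ S, w ≤ aeval A p u u) :
    #S ≤ #{j | w ≤ p.eval (hA.eigenvalues j)} := by
  simpa using hA.eigenvectorBasis.card_le_card_le_eigenvalues
    (hA.toLpLinAlgEquiv_aeval_eigenvectorBasis p)
    (EuclideanSpace.orthonormal_single.comp ((↑) : S → V) Subtype.val_injective)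
    (fun u v huv => by
      simpa [inner_single_toLpLinAlgEquiv_single] using hoff u.2 v.2 (Subtype.coe_ne_coe.mpr huv))
    (fun u => by simpa [inner_single_toLpLinAlgEquiv_single] using hdiag u u.2)

theorem card_le_card_eval_eigenvalues_le (hA : A.IsHermitian) (p : ℝ[X]) {S : Finset V} {W : ℝ}
    (hoff : (S : Set V).Pairwise fun u v => aeval A p u v = 0)
    (hdiag : ∀ u ∈ S, aeval A p u u ≤ W) :
    #S ≤ #{j | p.eval (hA.eigenvalues j) ≤ W} := by
  simpa using hA.eigenvectorBasis.card_le_card_eigenvalues_le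
    (hA.toLpLinAlgEquiv_aeval_eigenvectorBasis p)
    (EuclideanSpace.orthonormal_single.comp ((↑) : S → V) Subtype.val_injective)
    (fun u v huv => by
      simpa [inner_single_toLpLinAlgEquiv_single] using hoff u.2 v.2 (Subtype.coe_ne_coe.mpr huv))
    (fun u => by simpa [inner_single_toLpLinAlgEquiv_single] using hdiag u u.2)

end Matrix.IsHermitian

namespace SimpleGraph

variable {V R : Type*} [Fintype V] [DecidableEq V] {G : SimpleGraph V} [DecidableRel G.Adj]

theorem adjMatrix_pow_apply_eq_zero_of_lt_dist [Semiring R] {u v : V} {k : ℕ}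
    (h : k < G.dist u v) : (G.adjMatrix R ^ k) u v = 0 := by
  have : IsEmpty {q : G.Walk u v | q.length = k} := ⟨fun ⟨q, hq⟩ => (G.dist_le q).not_gt (hq ▸ h)⟩
  rw [adjMatrix_pow_apply_eq_card_walk, Fintype.card_eq_zero, Nat.cast_zero]

theorem aeval_adjMatrix_apply_eq_zero_of_natDegree_lt_dist [CommSemiring R] (p : R[X])
    {u v : V} (h : p.natDegree < G.dist u v) : aeval (G.adjMatrix R) p u v = 0 := by
  rw [aeval_eq_sum_range, Matrix.sum_apply]
  refine Finset.sum_eq_zero fun k hk => ?_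
  rw [Matrix.smul_apply, adjMatrix_pow_apply_eq_zero_of_lt_dist (by simp at hk; omega), smul_zero]

end SimpleGraph

theorem IsEquidistantSet.pairwise_aeval_adjMatrix_apply_eq_zero {V R : Type*} [Fintype V]
    [DecidableEq V] [CommSemiring R] {G : SimpleGraph V} [DecidableRel G.Adj] {t : ℕ}
    {S : Finset V} (hS : IsEquidistantSet G (t + 1) S) {p : R[X]} (hp : p.natDegree ≤ t) :
    (S : Set V).Pairwise fun u v => aeval (G.adjMatrix R) p u v = 0 :=
  hS.mono' fun _ _ huv => G.aeval_adjMatrix_apply_eq_zero_of_natDegree_lt_dist p (by omega)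

theorem eqNum_le_of_forall_card_le {V : Type*} [Fintype V] {G : SimpleGraph V} {t m : ℕ}
    (h : ∀ S, IsEquidistantSet G t S → #S ≤ m) : eqNum G t ≤ m :=
  csSup_le ⟨0, ∅, by simp [IsEquidistantSet], rfl⟩ (by rintro _ ⟨S, hS, rfl⟩; exact h S hS)

theorem Equiv.ncard_setOf_apply {α β : Type*} [Fintype β] (e : α ≃ β) (P : β → Prop)
    [DecidablePred P] : {a | P (e a)}.ncard = #{b | P b} := by
  rw [← Set.ncard_coe_finset, ← Set.ncard_preimage_of_injective_subset_range e.injective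
    (by simp [e.range_eq_univ])]
  simp

theorem eqNum_succ_le_inertial_bound_general {V : Type*} [Fintype V] [DecidableEq V]
    (G : SimpleGraph V) [DecidableRel G.Adj]
    (n : ℕ)
    (hA : (G.adjMatrix ℝ).IsHermitian)
    (lam : Fin n → ℝ)
    (hlist : ∃ e : Fin n ≃ V, ∀ i, lam i = hA.eigenvalues (e i))
    (t : ℕ) (p : Polynomial ℝ) (hp : p.natDegree ≤ t)
    (W w : ℝ)
    (hW : IsGreatest (Set.range fun u : V => (Polynomial.aeval (G.adjMatrix ℝ) p) u u) W)
    (hw : IsLeast (Set.range fun u : V => (Polynomial.aeval (G.adjMatrix ℝ) p) u u) w) :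
    eqNum G (t + 1) ≤
      min {i : Fin n | w ≤ p.eval (lam i)}.ncard {i : Fin n | p.eval (lam i) ≤ W}.ncard := by
  obtain ⟨e, he⟩ := hlist
  simp only [he, e.ncard_setOf_apply (fun j => w ≤ p.eval (hA.eigenvalues j)),
    e.ncard_setOf_apply (fun j => p.eval (hA.eigenvalues j) ≤ W)]
  refine eqNum_le_of_forall_card_le fun S hS => le_min ?_ ?_
  · exact hA.card_le_card_le_eval_eigenvalues p (hS.pairwise_aeval_adjMatrix_apply_eq_zero hp)
      fun u _ => hw.2 ⟨u, rfl⟩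
  · exact hA.card_le_card_eval_eigenvalues_le p (hS.pairwise_aeval_adjMatrix_apply_eq_zero hp)
      fun u _ => hW.2 ⟨u, rfl⟩

/-- Inertial-type bound. Let `G` be connected on `n` vertices with adjacency
matrix `A` and eigenvalues `λ_1 ≥ ⋯ ≥ λ_n` (with multiplicity). For a real polynomial `p` of
degree at most `t`, with `W(p)` and `w(p)` the largest and smallest diagonal entries of `p(A)`:
`eq_{t+1}(G) ≤ min{#{i : p(λ_i) ≥ w(p)}, #{i : p(λ_i) ≤ W(p)}}`. -/
theorem eqNum_succ_le_inertial_bound {V : Type*} [Fintype V] [DecidableEq V]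
    (G : SimpleGraph V) [DecidableRel G.Adj] (hG : G.Connected)
    (n : ℕ) (hn : Fintype.card V = n)
    (hA : (G.adjMatrix ℝ).IsHermitian)
    (lam : Fin n → ℝ) (hanti : Antitone lam)
    (hlist : ∃ e : Fin n ≃ V, ∀ i, lam i = hA.eigenvalues (e i))
    (t : ℕ) (ht : 1 ≤ t) (p : Polynomial ℝ) (hp : p.natDegree ≤ t)
    (W w : ℝ)
    (hW : IsGreatest (Set.range fun u : V => (Polynomial.aeval (G.adjMatrix ℝ) p) u u) W)
    (hw : IsLeast (Set.range fun u : V => (Polynomial.aeval (G.adjMatrix ℝ) p) u u) w) :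
    eqNum G (t + 1) ≤
      min {i : Fin n | w ≤ p.eval (lam i)}.ncard {i : Fin n | p.eval (lam i) ≤ W}.ncard :=
  eqNum_succ_le_inertial_bound_general G n hA lam hlist t p hp W w hW hw
end

section
/- Let G be a connected k-regular finite simple graph on n vertices with k ≥ 1, whose distinct adjacency eigenvalues are k = θ_0 > θ_1 > ... > θ_d with d ≥ 2. Let θ_i be the largest eigenvalue among θ_0,...,θ_d such that θ_i ≤ −1 (such an i exists and satisfies i ≥ 1). Then eq_3(G) ≤ n · (θ_0 + θ_i θ_{i−1}) / ((θ_0 − θ_i)(θ_0 − θ_{i−1})). -/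
/-!
If `S` is a `3`-equidistant set, no two of its vertices are adjacent or have a common neighbour,
so for its indicator `χ` we get `χᵀ A χ = 0` and `χᵀ A² χ = k |S|`. No eigenvalue lies strictly
between `θ_i` and `θ_{i-1}`, so `M = (A - θ_i)(A - θ_{i-1})` is positive semidefinite, and
`M 1 = (k - θ_i)(k - θ_{i-1}) 1` by regularity; testing `M` on `χ - (|S| / n) 1` gives the bound.
The denominator is positive because `θ_1 > -1`: otherwise the identity
`∑ (λ - k)(λ + 1) = tr (A - k)(A + 1) = 0` would force the spectrum to be `{k, -1}`.
-/

open SimpleGraph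

open Matrix

section EquidistantNumber

variable {V : Type*} [Fintype V] {G : SimpleGraph V} {t : ℕ} {S : Finset V}

lemma bddAbove_card_isEquidistantSet (G : SimpleGraph V) (t : ℕ) :
    BddAbove {n : ℕ | ∃ S : Finset V, IsEquidistantSet G t S ∧ S.card = n} :=
  ⟨Fintype.card V, by rintro _ ⟨S, -, rfl⟩; exact S.card_le_univ⟩

lemma exists_isEquidistantSet_card_eq_eqNum (G : SimpleGraph V) (t : ℕ) :
    ∃ S : Finset V, IsEquidistantSet G t S ∧ S.card = eqNum G t :=
  Nat.sSup_mem (s := {n | ∃ S : Finset V, IsEquidistantSet G t S ∧ S.card = n})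
    ⟨0, ∅, by simp [IsEquidistantSet], rfl⟩ (bddAbove_card_isEquidistantSet G t)

lemma IsEquidistantSet.card_le_eqNum (hS : IsEquidistantSet G t S) : S.card ≤ eqNum G t :=
  le_csSup (bddAbove_card_isEquidistantSet G t) ⟨S, hS, rfl⟩

lemma one_le_eqNum [Nonempty V] (G : SimpleGraph V) (t : ℕ) : 1 ≤ eqNum G t := by
  classical
  simpa using (show IsEquidistantSet G t {Classical.arbitrary V} by
    simp [IsEquidistantSet]).card_le_eqNum

end EquidistantNumber

namespace IsEquidistantSet

variable {V : Type*} {G : SimpleGraph V} {t : ℕ} {S : Finset V} {u v w : V}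

lemma not_adj (hS : IsEquidistantSet G t S) (ht : 2 ≤ t) (hu : u ∈ S) (hv : v ∈ S) :
    ¬ G.Adj u v := fun huv => by
  have : G.dist u v ≤ 1 := by simpa using dist_le huv.toWalk
  have := hS hu hv (G.ne_of_adj huv)
  omega

lemma eq_of_adj_of_adj (hS : IsEquidistantSet G t S) (ht : 3 ≤ t) (hu : u ∈ S) (hv : v ∈ S)
    (huw : G.Adj u w) (hwv : G.Adj w v) : u = v := by
  by_contra huv
  have : G.dist u v ≤ 2 := by simpa using dist_le (Walk.cons huw (Walk.cons hwv Walk.nil))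
  have := hS hu hv huv
  omega

end IsEquidistantSet

namespace Matrix

variable {V : Type*} [Fintype V]

lemma dotProduct_mulVec_indicator {R : Type*} [NonAssocSemiring R] (B : Matrix V V R)
    (S : Finset V) :
    (S : Set V).indicator 1 ⬝ᵥ (B *ᵥ (S : Set V).indicator 1) = ∑ u ∈ S, ∑ v ∈ S, B u v := by
  classical
  simp [dotProduct, mulVec, Set.indicator_apply, Finset.sum_ite_mem]

/-- Test the form of `M` on `x` minus its projection onto `1`. -/
lemma PosSemidef.sum_sq_mul_le {M : Matrix V V ℝ} (hM : M.PosSemidef) {p : ℝ}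
    (hM1 : M *ᵥ 1 = p • 1) (x : V → ℝ) :
    (∑ v, x v) ^ 2 * p ≤ Fintype.card V * (x ⬝ᵥ (M *ᵥ x)) := by
  rcases isEmpty_or_nonempty V with hV | hV
  · simp
  set n : ℝ := (Fintype.card V : ℝ)
  set s := ∑ v, x v
  have hsum : x ⬝ᵥ 1 = s := by simp [dotProduct, s]
  have hone : (1 : V → ℝ) ⬝ᵥ 1 = n := by simp [dotProduct, n]
  have hMT : Mᵀ = M := by simpa using hM.isHermitian.eq
  have h1Mx : (1 : V → ℝ) ⬝ᵥ (M *ᵥ x) = p * s := by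
    rw [dotProduct_mulVec, ← mulVec_transpose, hMT, hM1, smul_dotProduct, dotProduct_comm, hsum,
      smul_eq_mul]
  have hform : (n • x - s • 1) ⬝ᵥ (M *ᵥ (n • x - s • 1)) =
      n * (n * (x ⬝ᵥ (M *ᵥ x)) - s ^ 2 * p) := by
    simp only [mulVec_sub, mulVec_smul, hM1, sub_dotProduct, dotProduct_sub, smul_dotProduct,
      dotProduct_smul, h1Mx, hsum, hone, smul_eq_mul]
    ring
  have := hM.dotProduct_mulVec_nonneg (n • x - s • 1)
  simp only [star_trivial, hform] at this
  have hn : 0 < n := by positivity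
  nlinarith

end Matrix

namespace Matrix.IsHermitian

variable {V : Type*} [Fintype V] [DecidableEq V] {A : Matrix V V ℝ}

lemma cfc_sub_mul_sub (hA : A.IsHermitian) (a b : ℝ) :
    cfc (fun x => (x - a) * (x - b)) A = (A - a • 1) * (A - b • 1) := by
  rw [cfc_mul .., cfc_sub .., cfc_sub .., cfc_id' .., cfc_const .., cfc_const ..]
  simp [Algebra.algebraMap_eq_smul_one]

lemma trace_cfc (hA : A.IsHermitian) (f : ℝ → ℝ) :
    (cfc f A).trace = ∑ v, f (hA.eigenvalues v) := by
  rw [hA.cfc_eq, IsHermitian.cfc, Unitary.conjStarAlgAut_apply, trace_mul_cycle]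
  simp

open scoped MatrixOrder in
lemma posSemidef_sub_mul_sub (hA : A.IsHermitian) {a b : ℝ}
    (h : ∀ v, 0 ≤ (hA.eigenvalues v - a) * (hA.eigenvalues v - b)) :
    ((A - a • 1) * (A - b • 1)).PosSemidef := by
  rw [← hA.cfc_sub_mul_sub, ← nonneg_iff_posSemidef]
  refine cfc_nonneg fun x hx => ?_
  obtain ⟨v, rfl⟩ := hA.spectrum_real_eq_range_eigenvalues ▸ hx
  exact h v

end Matrix.IsHermitian

namespace SimpleGraph.IsRegularOfDegree

variable {V : Type*} [Fintype V] {G : SimpleGraph V} [DecidableRel G.Adj] {k : ℕ}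

lemma trace_adjMatrix_mul_self (hreg : G.IsRegularOfDegree k) :
    (G.adjMatrix ℝ * G.adjMatrix ℝ).trace = Fintype.card V * k := by
  simp only [trace, diag_apply, adjMatrix_mul_self_apply_self, hreg _, Finset.sum_const,
    Finset.card_univ, nsmul_eq_mul]

variable [DecidableEq V]

lemma sum_eigenvalues_sub_mul_sub (hreg : G.IsRegularOfDegree k)
    (hA : (G.adjMatrix ℝ).IsHermitian) (a b : ℝ) :
    ∑ v, (hA.eigenvalues v - a) * (hA.eigenvalues v - b) = Fintype.card V * (k + a * b) := by
  rw [← hA.trace_cfc (fun x => (x - a) * (x - b)), hA.cfc_sub_mul_sub]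
  simp only [mul_sub, sub_mul, smul_mul_assoc, mul_smul_comm, one_mul, mul_one, trace_sub,
    trace_smul, trace_one, hreg.trace_adjMatrix_mul_self, trace_adjMatrix, smul_eq_mul]
  ring

lemma eigenvalues_eq_or_eq_neg_one (hreg : G.IsRegularOfDegree k)
    (hA : (G.adjMatrix ℝ).IsHermitian) (h : ∀ v, hA.eigenvalues v = k ∨ hA.eigenvalues v ≤ -1)
    (v : V) : hA.eigenvalues v = k ∨ hA.eigenvalues v = -1 := by
  have hterm : ∀ v, 0 ≤ (hA.eigenvalues v - k) * (hA.eigenvalues v - (-1)) := fun v => by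
    rcases h v with hv | hv
    · simp [hv]
    · exact mul_nonneg_of_nonpos_of_nonpos (by linarith [k.cast_nonneg (α := ℝ)]) (by linarith)
  have hsum := hreg.sum_eigenvalues_sub_mul_sub hA k (-1)
  rw [mul_neg_one, add_neg_cancel, mul_zero, Finset.sum_eq_zero_iff_of_nonneg fun v _ => hterm v]
    at hsum
  simpa [sub_eq_zero, sub_neg_eq_add, add_eq_zero_iff_eq_neg] using hsum v (Finset.mem_univ v)

lemma sub_mul_sub_mulVec_one (hreg : G.IsRegularOfDegree k) (a b : ℝ) :
    ((G.adjMatrix ℝ - a • 1) * (G.adjMatrix ℝ - b • 1)) *ᵥ 1 = ((k - a) * (k - b)) • 1 := by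
  have hA1 : G.adjMatrix ℝ *ᵥ 1 = (k : ℝ) • 1 := by
    ext v
    simp [hreg v]
  simp only [← mulVec_mulVec, sub_mulVec, smul_mulVec, one_mulVec, mulVec_sub, mulVec_smul, hA1]
  module

/-- Otherwise every eigenvalue other than `k` is at most `-1`, hence equal to `-1`. -/
lemma neg_one_lt_second_eigenvalue (hreg : G.IsRegularOfDegree k)
    (hA : (G.adjMatrix ℝ).IsHermitian) {d : ℕ} (hd : 2 ≤ d) {θ : ℕ → ℝ}
    (hθ : StrictAntiOn θ (Set.Iic d)) (hθ0 : θ 0 = k)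
    (hev : ∀ v, ∃ j ≤ d, θ j = hA.eigenvalues v) (h2 : θ 2 ∈ Set.range hA.eigenvalues) :
    -1 < θ 1 := by
  by_contra! h1
  obtain ⟨v₂, hv₂⟩ := h2
  have h21 : θ 2 < θ 1 := hθ (by simp; omega) (by simpa using hd) one_lt_two
  have h20 : θ 2 < θ 0 := hθ (by simp) (by simpa using hd) two_pos
  refine (hreg.eigenvalues_eq_or_eq_neg_one hA (fun v => ?_) v₂).elim ?_ ?_
  · obtain ⟨_ | j, hj, hjv⟩ := hev v
    · exact .inl (hjv ▸ hθ0)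
    · exact .inr (hjv ▸ (hθ.antitoneOn (by simp; omega) hj (by omega)).trans h1)
  all_goals intro h; linarith

end SimpleGraph.IsRegularOfDegree

namespace IsEquidistantSet

variable {V : Type*} [Fintype V] [DecidableEq V] {G : SimpleGraph V} [DecidableRel G.Adj]
  {k t : ℕ} {S : Finset V}

lemma dotProduct_mulVec_indicator_eq (hS : IsEquidistantSet G t S) (ht : 3 ≤ t)
    (hreg : G.IsRegularOfDegree k) (a b : ℝ) :
    (S : Set V).indicator 1 ⬝ᵥ
        (((G.adjMatrix ℝ - a • 1) * (G.adjMatrix ℝ - b • 1)) *ᵥ (S : Set V).indicator 1) =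
      S.card * (k + a * b) := by
  set A := G.adjMatrix ℝ
  have hentry : ∀ u ∈ S, ∀ v ∈ S,
      ((A - a • 1) * (A - b • 1)) u v = if u = v then k + a * b else 0 := by
    intro u hu v hv
    have hA : A u v = 0 := by simp [A, hS.not_adj (by omega) hu hv]
    have hA2 : (A * A) u v = if u = v then (k : ℝ) else 0 := by
      split_ifs with huv
      · rw [← huv, adjMatrix_mul_self_apply_self, hreg u]
      · refine (adjMatrix_mul_apply ..).trans (Finset.sum_eq_zero fun w hw => ?_)
        have hwv : ¬ G.Adj w v := fun hwv =>
          huv (hS.eq_of_adj_of_adj ht hu hv ((mem_neighborFinset ..).1 hw) hwv)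
        simp [A, hwv]
    have hexpand : (A - a • 1) * (A - b • 1) = A * A - (a + b) • A + (a * b) • 1 := by
      rw [sub_mul, mul_sub, mul_sub, add_smul, smul_mul_smul_comm]
      simp only [mul_smul_comm, smul_mul_assoc, one_mul, mul_one]
      abel
    rw [hexpand, Matrix.add_apply, Matrix.sub_apply, Matrix.smul_apply, Matrix.smul_apply,
      one_apply, hA, hA2]
    split_ifs <;> simp
  rw [dotProduct_mulVec_indicator]
  simp only [Finset.sum_congr rfl fun u hu => Finset.sum_congr rfl (hentry u hu),
    Finset.sum_ite_eq, Finset.sum_ite_mem, Finset.inter_self, Finset.sum_const, nsmul_eq_mul]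

end IsEquidistantSet

lemma sub_mul_sub_nonneg_of_strictAntiOn {θ : ℕ → ℝ} {d i j : ℕ}
    (hθ : StrictAntiOn θ (Set.Iic d)) (hi : 1 ≤ i) (hid : i ≤ d) (hjd : j ≤ d) :
    0 ≤ (θ j - θ i) * (θ j - θ (i - 1)) := by
  have hi' : i - 1 ≤ d := by omega
  have hgap : θ i < θ (i - 1) := hθ hi' hid (by omega)
  rcases le_or_gt j (i - 1) with hj | hj
  · have := hθ.antitoneOn hjd hi' hj
    exact mul_nonneg (by linarith) (by linarith)
  · have := hθ.antitoneOn hid hjd (by omega : i ≤ j)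
    exact mul_nonneg_of_nonpos_of_nonpos (by linarith) (by linarith)

theorem eqNum_three_le_ratio_bound_general {V : Type*} [Fintype V] [DecidableEq V]
    (G : SimpleGraph V) [DecidableRel G.Adj]
    (n : ℕ) (hn : Fintype.card V = n)
    (k : ℕ) (hreg : G.IsRegularOfDegree k)
    (hA : (G.adjMatrix ℝ).IsHermitian)
    (d : ℕ) (hd : 2 ≤ d) (θ : ℕ → ℝ)
    (hθstrict : ∀ j l : ℕ, j < l → l ≤ d → θ l < θ j)
    (hθ0 : θ 0 = (k : ℝ))
    (hspec : {x : ℝ | ∃ j ≤ d, θ j = x} = Set.range hA.eigenvalues)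
    (i : ℕ) (hid : i ≤ d) (hi1 : 1 ≤ i)
    (hile : θ i ≤ -1) :
    (eqNum G 3 : ℝ) ≤
      n * (θ 0 + θ i * θ (i - 1)) / ((θ 0 - θ i) * (θ 0 - θ (i - 1))) := by
  have hθ : StrictAntiOn θ (Set.Iic d) := fun j hj l hl hjl => hθstrict j l hjl hl
  have hev : ∀ v, ∃ j ≤ d, θ j = hA.eigenvalues v := fun v =>
    (Set.ext_iff.1 hspec _).2 ⟨v, rfl⟩
  obtain ⟨v, -⟩ : θ 2 ∈ Set.range hA.eigenvalues := hspec ▸ ⟨2, hd, rfl⟩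
  have : Nonempty V := ⟨v⟩
  have hi2 : 2 ≤ i := by
    by_contra! hi
    obtain rfl : i = 1 := by omega
    linarith [hreg.neg_one_lt_second_eigenvalue hA hd hθ hθ0 hev (hspec ▸ ⟨2, hd, rfl⟩)]
  obtain ⟨S, hS, hcard⟩ := exists_isEquidistantSet_card_eq_eqNum G 3
  have hpsd := hA.posSemidef_sub_mul_sub (a := θ i) (b := θ (i - 1)) fun v => by
    obtain ⟨j, hj, hjv⟩ := hev v
    exact hjv ▸ sub_mul_sub_nonneg_of_strictAntiOn hθ hi1 hid hj
  have key := hpsd.sum_sq_mul_le (hreg.sub_mul_sub_mulVec_one _ _) ((S : Set V).indicator 1)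
  rw [hS.dotProduct_mulVec_indicator_eq le_rfl hreg, hcard] at key
  have hsum : ∑ v, (S : Set V).indicator (1 : V → ℝ) v = eqNum G 3 := by
    simp [Set.indicator_apply, hcard]
  have hp : 0 < (θ 0 - θ i) * (θ 0 - θ (i - 1)) :=
    mul_pos (by linarith [hθstrict 0 i (by omega) hid])
      (by linarith [hθstrict 0 (i - 1) (by omega) (by omega)])
  have hs : (1 : ℝ) ≤ eqNum G 3 := by exact_mod_cast one_le_eqNum G 3
  rw [hsum, hn, ← hθ0] at key
  rw [le_div_iff₀ hp]
  nlinarith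

/-- best Ratio-type bound for `t = 3`. Let `G` be a connected `k`-regular
graph, `k ≥ 1`, on `n` vertices with distinct adjacency eigenvalues
`k = θ_0 > θ_1 > ⋯ > θ_d`, `d ≥ 2`, and let `θ_i` be the largest eigenvalue with
`θ_i ≤ -1` (it satisfies `i ≥ 1`). Then
`eq_3(G) ≤ n (θ_0 + θ_i θ_{i-1}) / ((θ_0 - θ_i)(θ_0 - θ_{i-1}))`. -/
theorem eqNum_three_le_ratio_bound {V : Type*} [Fintype V] [DecidableEq V]
    (G : SimpleGraph V) [DecidableRel G.Adj] (hG : G.Connected)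
    (n : ℕ) (hn : Fintype.card V = n)
    (k : ℕ) (hk : 1 ≤ k) (hreg : G.IsRegularOfDegree k)
    (hA : (G.adjMatrix ℝ).IsHermitian)
    (d : ℕ) (hd : 2 ≤ d) (θ : ℕ → ℝ)
    (hθstrict : ∀ j l : ℕ, j < l → l ≤ d → θ l < θ j)
    (hθ0 : θ 0 = (k : ℝ))
    (hspec : {x : ℝ | ∃ j ≤ d, θ j = x} = Set.range hA.eigenvalues)
    (i : ℕ) (hid : i ≤ d) (hi1 : 1 ≤ i)
    (hile : θ i ≤ -1)
    (himax : ∀ j ≤ d, θ j ≤ -1 → θ j ≤ θ i) :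
    (eqNum G 3 : ℝ) ≤
      n * (θ 0 + θ i * θ (i - 1)) / ((θ 0 - θ i) * (θ 0 - θ (i - 1))) :=
  eqNum_three_le_ratio_bound_general G n hn k hreg hA d hd θ hθstrict hθ0 hspec i hid hi1 hile
end

section
/- Let n and k be integers with 1 ≤ k < n. Then the k-equidistant number of the Johnson graph J(n,k) equals ⌊n/k⌋, i.e., eq_k(J(n,k)) = ⌊n/k⌋. -/
open SimpleGraph

/-- The Johnson graph `J(n,k)`: vertices are the `k`-element subsets of `Fin n`, two subsets
being adjacent iff their intersection has exactly `k - 1` elements. -/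
def johnsonGraph (n k : ℕ) : SimpleGraph {s : Finset (Fin n) // s.card = k} where
  Adj a b := a ≠ b ∧ (a.1 ∩ b.1).card = k - 1
  symm := by
    constructor
    intro a b h
    exact ⟨h.1.symm, by rw [Finset.inter_comm]; exact h.2⟩
  loopless := by
    constructor
    intro a h
    exact h.1 rfl

/-!
In `J(n,k)` the distance between `a` and `b` is `#(a \ b)`: one swap lowers it by one, and an edge
changes it by at most one. Hence a `k`-equidistant set is exactly a family of pairwise disjoint
`k`-subsets of `Fin n`; at most `⌊n/k⌋` of them fit, and `⌊n/k⌋` do.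
-/

namespace SimpleGraph

variable {V : Type*} {G : SimpleGraph V}

theorem Walk.le_add_length {f : V → ℕ} (hf : ∀ u v, G.Adj u v → f u ≤ f v + 1) {u v : V}
    (p : G.Walk u v) : f u ≤ f v + p.length := by
  induction p with
  | nil => simp
  | cons h _ ih =>
    have := hf _ _ h
    rw [Walk.length_cons]
    omega

theorem exists_walk_length_le {f : V → ℕ} {v : V}
    (hf : ∀ u, u ≠ v → ∃ w, G.Adj u w ∧ f w < f u) (u : V) :
    ∃ p : G.Walk u v, p.length ≤ f u := by
  induction hu : f u using Nat.strong_induction_on generalizing u with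
  | _ m ih =>
    by_cases huv : u = v
    · subst huv
      exact ⟨Walk.nil, Nat.zero_le _⟩
    obtain ⟨w, hadj, hlt⟩ := hf u huv
    obtain ⟨p, hp⟩ := ih (f w) (hu ▸ hlt) w rfl
    exact ⟨Walk.cons hadj p, by rw [Walk.length_cons]; omega⟩

theorem dist_eq_of_adj_le_of_exists_adj_lt {f : V → ℕ} {v : V} (hv : f v = 0)
    (hle : ∀ u w, G.Adj u w → f u ≤ f w + 1) (hlt : ∀ u, u ≠ v → ∃ w, G.Adj u w ∧ f w < f u)
    (u : V) : G.dist u v = f u := by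
  obtain ⟨p, hp⟩ := exists_walk_length_le hlt u
  obtain ⟨q, hq⟩ := Reachable.exists_walk_length_eq_dist ⟨p⟩
  have := q.le_add_length hle
  have := dist_le p
  omega

end SimpleGraph

open Finset Function

theorem Finset.card_mul_le_card_of_pairwiseDisjoint {ι α : Type*} [Fintype α] {S : Finset ι}
    {f : ι → Finset α} {k : ℕ} (hf : ∀ i ∈ S, #(f i) = k) (hS : (S : Set ι).PairwiseDisjoint f) :
    #S * k ≤ Fintype.card α := by
  classical
  calc #S * k = #(S.biUnion f) := by rw [card_biUnion hS, sum_const_nat hf]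
    _ ≤ Fintype.card α := card_le_univ _

theorem Finset.exists_pairwise_disjoint_card_eq {α : Type*} [Fintype α] {m k : ℕ}
    (h : m * k ≤ Fintype.card α) :
    ∃ f : Fin m → Finset α, (∀ i, #(f i) = k) ∧ Pairwise (Disjoint on f) := by
  obtain ⟨e⟩ := Function.Embedding.nonempty_of_card_le (α := Fin m × Fin k) (β := α)
    (by simpa using h)
  refine ⟨fun i => univ.map ((Function.Embedding.sectR i (Fin k)).trans e), fun i => by simp,
    fun i j hij => ?_⟩
  simp [Function.onFun, disjoint_left, e.injective.eq_iff, hij.symm]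

namespace johnsonGraph

variable {n k : ℕ}

theorem sdiff_nonempty_of_ne {a b : {s : Finset (Fin n) // #s = k}} (hab : a ≠ b) :
    (a.1 \ b.1).Nonempty :=
  sdiff_nonempty.2 fun hsub => hab <| Subtype.ext <| eq_of_subset_of_card_le hsub <| by
    rw [a.2, b.2]

theorem adj_iff {a b : {s : Finset (Fin n) // #s = k}} :
    (johnsonGraph n k).Adj a b ↔ #(a.1 \ b.1) = 1 := by
  have h := card_sdiff_add_card_inter a.1 b.1
  rw [a.2] at h
  constructor
  · rintro ⟨hab, hinter⟩
    have := (sdiff_nonempty_of_ne hab).card_pos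
    omega
  · intro h1
    refine ⟨?_, by omega⟩
    rintro rfl
    simp at h1

theorem card_sdiff_le_of_adj {a a' : {s : Finset (Fin n) // #s = k}} (c : Finset (Fin n))
    (h : (johnsonGraph n k).Adj a a') : #(a.1 \ c) ≤ #(a'.1 \ c) + 1 :=
  calc #(a.1 \ c) ≤ #((a.1 \ a'.1) ∪ (a'.1 \ c)) :=
        card_le_card fun x => by simp only [mem_sdiff, mem_union]; tauto
    _ ≤ #(a.1 \ a'.1) + #(a'.1 \ c) := card_union_le _ _
    _ = #(a'.1 \ c) + 1 := by rw [adj_iff.1 h, add_comm]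

theorem exists_adj_card_sdiff_lt {a b : {s : Finset (Fin n) // #s = k}} (hab : a ≠ b) :
    ∃ a', (johnsonGraph n k).Adj a a' ∧ #(a'.1 \ b.1) < #(a.1 \ b.1) := by
  obtain ⟨x, hx⟩ := sdiff_nonempty_of_ne hab
  obtain ⟨y, hy⟩ := sdiff_nonempty_of_ne (Ne.symm hab)
  rw [mem_sdiff] at hx hy
  have hya : y ∉ a.1.erase x := fun h => hy.2 (mem_of_mem_erase h)
  have hk := card_pos.2 ⟨x, hx.1⟩
  refine ⟨⟨insert y (a.1.erase x), ?_⟩, adj_iff.2 ?_, ?_⟩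
  · rw [card_insert_of_notMem hya, card_erase_of_mem hx.1, a.2]
    omega
  · have : a.1 \ insert y (a.1.erase x) = {x} := by
      ext z
      simp only [mem_sdiff, mem_insert, mem_erase, mem_singleton]
      constructor
      · rintro ⟨hz, hne⟩
        by_contra hzx
        exact hne (Or.inr ⟨hzx, hz⟩)
      · rintro rfl
        exact ⟨hx.1, by rintro (rfl | ⟨hne, -⟩) <;> [exact hy.2 hx.1; exact hne rfl]⟩
    rw [this, card_singleton]
  · calc #(insert y (a.1.erase x) \ b.1) ≤ #((a.1 \ b.1).erase x) := card_le_card fun z => by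
          simp only [mem_sdiff, mem_insert, mem_erase]
          rintro ⟨rfl | ⟨hzx, hz⟩, hzb⟩
          exacts [absurd hy.1 hzb, ⟨hzx, hz, hzb⟩]
      _ < #(a.1 \ b.1) := card_erase_lt_of_mem (mem_sdiff.2 hx)

theorem dist_eq_card_sdiff (a b : {s : Finset (Fin n) // #s = k}) :
    (johnsonGraph n k).dist a b = #(a.1 \ b.1) :=
  SimpleGraph.dist_eq_of_adj_le_of_exists_adj_lt (f := fun c => #(c.1 \ b.1)) (by simp)
    (fun _ _ => card_sdiff_le_of_adj b.1) (fun _ => exists_adj_card_sdiff_lt) a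

theorem dist_eq_iff_disjoint (a b : {s : Finset (Fin n) // #s = k}) :
    (johnsonGraph n k).dist a b = k ↔ Disjoint a.1 b.1 := by
  have := card_sdiff_add_card_inter a.1 b.1
  rw [a.2] at this
  rw [dist_eq_card_sdiff, disjoint_iff_inter_eq_empty, ← card_eq_zero]
  omega

theorem isEquidistantSet_iff (S : Finset {s : Finset (Fin n) // #s = k}) :
    IsEquidistantSet (johnsonGraph n k) k S ↔ (S : Set {s : Finset (Fin n) // #s = k}).PairwiseDisjoint Subtype.val := by
  simp only [IsEquidistantSet, dist_eq_iff_disjoint]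
  rfl

theorem card_le_of_isEquidistantSet (hk : 1 ≤ k) {S : Finset {s : Finset (Fin n) // #s = k}}
    (hS : IsEquidistantSet (johnsonGraph n k) k S) : #S ≤ n / k :=
  (Nat.le_div_iff_mul_le hk).2 <| by
    simpa using card_mul_le_card_of_pairwiseDisjoint (fun v _ => v.2) ((isEquidistantSet_iff S).1 hS)

theorem exists_isEquidistantSet_card_eq (hk : 1 ≤ k) :
    ∃ S : Finset {s : Finset (Fin n) // #s = k},
      IsEquidistantSet (johnsonGraph n k) k S ∧ #S = n / k := by
  obtain ⟨f, hcard, hdisj⟩ :=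
    exists_pairwise_disjoint_card_eq (α := Fin n) (by simpa using Nat.div_mul_le_self n k)
  have hinj : Function.Injective fun i => (⟨f i, hcard i⟩ : {s : Finset (Fin n) // #s = k}) := by
    intro i j hij
    by_contra hne
    have := hdisj hne
    simp only [Subtype.mk.injEq] at hij
    rw [Function.onFun, hij, disjoint_self_iff_empty, ← card_eq_zero, hcard] at this
    omega
  refine ⟨univ.map ⟨_, hinj⟩, (isEquidistantSet_iff _).2 ?_, by simp⟩
  rw [coe_map]
  rintro _ ⟨i, -, rfl⟩ _ ⟨j, -, rfl⟩ hij
  exact hdisj fun h => hij (congrArg _ h)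

end johnsonGraph

theorem eqNum_johnsonGraph_general (n k : ℕ) (hk : 1 ≤ k) :
    eqNum (johnsonGraph n k) k = n / k := by
  refine IsGreatest.csSup_eq ⟨johnsonGraph.exists_isEquidistantSet_card_eq hk, ?_⟩
  rintro _ ⟨S, hS, rfl⟩
  exact johnsonGraph.card_le_of_isEquidistantSet hk hS

/-- For `1 ≤ k < n`, the `k`-equidistant number of the Johnson graph
`J(n,k)` is `⌊n/k⌋`. -/
theorem eqNum_johnsonGraph (n k : ℕ) (hk : 1 ≤ k) (hkn : k < n) :
    eqNum (johnsonGraph n k) k = n / k :=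
  eqNum_johnsonGraph_general n k hk
end

section
/- Let G be a connected finite simple graph on n ≥ 2 vertices and t ≥ 1 an integer such that the exact distance t-power G^{[#t]} is a regular graph. Let β_1 ≥ β_2 ≥ ... ≥ β_n be the adjacency eigenvalues of G^{[#t]}, and assume n − β_1 + β_2 > 0. Then eq_t(G) ≤ n · (1 + β_2) / (n − β_1 + β_2). -/
open SimpleGraph

open scoped Classical

/-- The exact distance `t`-power of `G`: same vertex set, two distinct vertices adjacent iff
they are at distance exactly `t` in `G`. -/
def exactPower {V : Type*} (G : SimpleGraph V) (t : ℕ) : SimpleGraph V where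
  Adj u v := u ≠ v ∧ G.dist u v = t
  symm := by
    constructor
    intro u v h
    exact ⟨h.1.symm, by rw [SimpleGraph.dist_comm]; exact h.2⟩
  loopless := by
    constructor
    intro u h
    exact h.1 rfl

/-!
Let `A` be the adjacency matrix of the `r`-regular graph `G^{[#t]}` on `n` vertices, so that the
all-ones vector `𝟙` is an eigenvector for `r = β₁`, and `β₁` is the largest eigenvalue
(Gershgorin). On `𝟙^⊥` the quadratic form of `A` is at most `β₂ ‖z‖²`: if `β₁ > β₂`, the
`β₁`-eigenspace is spanned by `𝟙`. A `t`-equidistant set `S` of size `s` is a clique of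
`G^{[#t]}`; testing the form on `z = n χ_S - s 𝟙 ∈ 𝟙^⊥` gives
`n² s (s - 1) - n s² r ≤ β₂ n s (n - s)`, which rearranges to `s (n - β₁ + β₂) ≤ n (1 + β₂)`.
-/

open Finset Matrix

lemma Matrix.IsSymm.mulVec_dotProduct_comm {V R : Type*} [Fintype V] [CommSemiring R]
    {A : Matrix V V R} (hA : A.IsSymm) (x y : V → R) : A *ᵥ x ⬝ᵥ y = x ⬝ᵥ A *ᵥ y := by
  rw [dotProduct_mulVec, ← mulVec_transpose, hA.eq, dotProduct_comm]

namespace Matrix.IsHermitian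

variable {V : Type*} [Fintype V] [DecidableEq V] {A : Matrix V V ℝ} (hA : A.IsHermitian)

lemma dotProduct_eq_sum_eigenvectorBasis (x y : V → ℝ) :
    x ⬝ᵥ y = ∑ i, (⇑(hA.eigenvectorBasis i) ⬝ᵥ x) * (⇑(hA.eigenvectorBasis i) ⬝ᵥ y) := by
  have h := (hA.eigenvectorBasis).sum_inner_mul_inner (WithLp.toLp 2 x) (WithLp.toLp 2 y)
  simp only [EuclideanSpace.inner_eq_star_dotProduct, star_trivial] at h
  rw [dotProduct_comm, ← h]
  simp_rw [dotProduct_comm y]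

lemma dotProduct_mulVec_eq_sum_eigenvalues (x : V → ℝ) :
    x ⬝ᵥ A *ᵥ x = ∑ i, hA.eigenvalues i * (⇑(hA.eigenvectorBasis i) ⬝ᵥ x) ^ 2 := by
  rw [hA.dotProduct_eq_sum_eigenvectorBasis]
  refine sum_congr rfl fun i _ => ?_
  rw [← (isHermitian_iff_isSymm.mp hA).mulVec_dotProduct_comm, hA.mulVec_eigenvectorBasis,
    smul_dotProduct, smul_eq_mul]
  ring

lemma dotProduct_mulVec_le {x : V → ℝ} {μ : ℝ}
    (h : ∀ i, hA.eigenvalues i ≤ μ ∨ ⇑(hA.eigenvectorBasis i) ⬝ᵥ x = 0) :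
    x ⬝ᵥ A *ᵥ x ≤ μ * (x ⬝ᵥ x) := by
  rw [hA.dotProduct_mulVec_eq_sum_eigenvalues, hA.dotProduct_eq_sum_eigenvectorBasis x x, mul_sum]
  refine sum_le_sum fun i _ => ?_
  rcases h i with hi | hi
  · rw [← sq]
    exact mul_le_mul_of_nonneg_right hi (sq_nonneg _)
  · simp [hi]

lemma eigenvectorBasis_dotProduct_eq_zero {w : V → ℝ} {r : ℝ} (hw : A *ᵥ w = r • w) {i : V}
    (hi : hA.eigenvalues i ≠ r) : ⇑(hA.eigenvectorBasis i) ⬝ᵥ w = 0 := by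
  have h := (isHermitian_iff_isSymm.mp hA).mulVec_dotProduct_comm (hA.eigenvectorBasis i) w
  rw [hA.mulVec_eigenvectorBasis, hw, smul_dotProduct, dotProduct_smul, smul_eq_mul,
    smul_eq_mul] at h
  exact (mul_eq_mul_right_iff.mp h).resolve_left hi

lemma exists_eigenvalues_eq {w : V → ℝ} {r : ℝ} (hw : A *ᵥ w = r • w) (hw0 : w ≠ 0) :
    ∃ i, hA.eigenvalues i = r := by
  have hr : Module.End.HasEigenvalue (toLin' A) r :=
    Module.End.hasEigenvalue_of_hasEigenvector (x := w)
      ⟨Module.End.mem_eigenspace_iff.mpr (by rw [toLin'_apply, hw]), hw0⟩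
  rw [← Set.mem_range, ← hA.spectrum_real_eq_range_eigenvalues, ← spectrum_toLin']
  exact hr.mem_spectrum

lemma dotProduct_mulVec_le_of_dotProduct_eq_zero {w z : V → ℝ} {r μ : ℝ}
    (hw : A *ᵥ w = r • w) (hw0 : w ≠ 0) (hwz : w ⬝ᵥ z = 0) (hr : ∀ i, hA.eigenvalues i ≤ r)
    (hμ : ∀ i j, i ≠ j → hA.eigenvalues i ≤ μ ∨ hA.eigenvalues j ≤ μ) :
    z ⬝ᵥ A *ᵥ z ≤ μ * (z ⬝ᵥ z) := by
  refine hA.dotProduct_mulVec_le fun i => or_iff_not_imp_left.mpr fun hi => ?_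
  -- every other eigenvalue is `≤ μ < eigenvalues i ≤ r`, so `w` is a multiple of the `i`-th
  -- basis vector
  have hw_coord : ∀ j ≠ i, ⇑(hA.eigenvectorBasis j) ⬝ᵥ w = 0 := fun j hj =>
    hA.eigenvectorBasis_dotProduct_eq_zero hw
      ((((hμ i j hj.symm).resolve_left hi).trans_lt (not_le.mp hi)).trans_le (hr i)).ne
  have hw_i : ⇑(hA.eigenvectorBasis i) ⬝ᵥ w ≠ 0 := by
    refine fun h => hw0 (dotProduct_self_eq_zero.mp ?_)
    rw [hA.dotProduct_eq_sum_eigenvectorBasis]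
    refine sum_eq_zero fun j _ => ?_
    obtain rfl | hj := eq_or_ne j i
    · rw [h, zero_mul]
    · rw [hw_coord j hj, zero_mul]
  rw [hA.dotProduct_eq_sum_eigenvectorBasis,
    sum_eq_single i (fun j _ hj => by rw [hw_coord j hj, zero_mul]) (by simp)] at hwz
  exact (mul_eq_zero.mp hwz).resolve_left hw_i

end Matrix.IsHermitian

namespace SimpleGraph

variable {V : Type*} [Fintype V] {H : SimpleGraph V} [DecidableRel H.Adj]

lemma IsRegularOfDegree.adjMatrix_mulVec_one {d : ℕ} (hd : H.IsRegularOfDegree d) :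
    H.adjMatrix ℝ *ᵥ 1 = (d : ℝ) • 1 := by
  ext v
  simpa using adjMatrix_mulVec_const_apply_of_regular (a := (1 : ℝ)) hd (v := v)

lemma IsRegularOfDegree.eigenvalues_le [DecidableEq V] {d : ℕ} (hd : H.IsRegularOfDegree d)
    (hA : (H.adjMatrix ℝ).IsHermitian) (i : V) : hA.eigenvalues i ≤ d := by
  have hi : Module.End.HasEigenvalue (toLin' (H.adjMatrix ℝ)) (hA.eigenvalues i) := by
    rw [Module.End.hasEigenvalue_iff_mem_spectrum, spectrum_toLin']
    exact hA.eigenvalues_mem_spectrum_real i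
  obtain ⟨k, hk⟩ := eigenvalue_mem_ball hi
  have hrow : ∑ j ∈ univ.erase k, ‖H.adjMatrix ℝ k j‖ = d := by
    rw [sum_erase _ (by simp), ← hd k, ← card_neighborFinset_eq_degree]
    simp [adjMatrix_apply, apply_ite, neighborFinset_eq_filter]
  rw [Metric.mem_closedBall, hrow, adjMatrix_apply, if_neg H.irrefl, Real.dist_eq,
    sub_zero] at hk
  exact (le_abs_self _).trans hk

lemma IsClique.indicator_dotProduct_adjMatrix_mulVec {S : Finset V}
    (hS : H.IsClique (S : Set V)) :
    (S : Set V).indicator 1 ⬝ᵥ H.adjMatrix ℝ *ᵥ (S : Set V).indicator 1 =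
      (S.card : ℝ) * (S.card - 1) := by
  classical
  have hrow : ∀ u ∈ S, (H.adjMatrix ℝ *ᵥ (S : Set V).indicator 1) u = S.card - 1 := by
    intro u hu
    have hnbr : H.neighborFinset u ∩ S = S.erase u := by
      ext v
      simp only [mem_inter, mem_neighborFinset, mem_erase]
      exact ⟨fun ⟨huv, hv⟩ => ⟨huv.ne', hv⟩, fun ⟨hvu, hv⟩ => ⟨hS hu hv hvu.symm, hv⟩⟩
    rw [adjMatrix_mulVec_apply]
    simp [Set.indicator_apply, hnbr, card_erase_of_mem hu, Nat.cast_sub (card_pos.mpr ⟨u, hu⟩)]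
  simp only [dotProduct, Set.indicator_apply, mem_coe, Pi.one_apply, ite_mul, one_mul, zero_mul,
    sum_ite_mem, univ_inter]
  rw [sum_congr rfl hrow, sum_const, nsmul_eq_mul]

theorem IsClique.card_mul_le_of_isRegularOfDegree {d : ℕ} (hd : H.IsRegularOfDegree d) {μ : ℝ}
    (hμ : ∀ z : V → ℝ, 1 ⬝ᵥ z = 0 → z ⬝ᵥ H.adjMatrix ℝ *ᵥ z ≤ μ * (z ⬝ᵥ z))
    {S : Finset V} (hS : H.IsClique (S : Set V)) (hSne : S.Nonempty) :
    (S.card : ℝ) * (Fintype.card V - d + μ) ≤ Fintype.card V * (1 + μ) := by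
  classical
  set n : ℝ := (Fintype.card V : ℝ)
  set s : ℝ := (S.card : ℝ)
  set χ : V → ℝ := (S : Set V).indicator 1
  have h11 : (1 : V → ℝ) ⬝ᵥ 1 = n := by simp [n]
  have h1χ : 1 ⬝ᵥ χ = s := by simp [χ, s, one_dotProduct, Set.indicator_apply]
  have hχχ : χ ⬝ᵥ χ = s := by simp [χ, s, dotProduct, Set.indicator_apply]
  have hχAχ : χ ⬝ᵥ H.adjMatrix ℝ *ᵥ χ = s * (s - 1) := hS.indicator_dotProduct_adjMatrix_mulVec
  have h1Aχ : 1 ⬝ᵥ H.adjMatrix ℝ *ᵥ χ = d * s := by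
    rw [← H.isSymm_adjMatrix.mulVec_dotProduct_comm, hd.adjMatrix_mulVec_one, smul_dotProduct,
      h1χ, smul_eq_mul]
  have hz := hμ (n • χ - s • 1) (by
    simp only [dotProduct_sub, dotProduct_smul, h11, h1χ, smul_eq_mul]; ring)
  simp only [mulVec_sub, mulVec_smul, hd.adjMatrix_mulVec_one, dotProduct_sub, sub_dotProduct,
    dotProduct_smul, smul_dotProduct, dotProduct_comm χ 1, h11, h1χ, hχχ, hχAχ, h1Aχ,
    smul_eq_mul] at hz
  have hs : 0 < s := by simpa [s] using hSne.card_pos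
  have hn : s ≤ n := by simpa [s, n] using S.card_le_univ
  refine le_of_mul_le_mul_left ?_ (mul_pos (hs.trans_le hn) hs)
  linear_combination hz

end SimpleGraph

lemma Antitone.apply_le_or_apply_le_of_ne {α : Type*} [Preorder α] {n : ℕ} {β : Fin n → α}
    (hβ : Antitone β) (h1 : 1 < n) {a b : Fin n} (hab : a ≠ b) :
    β a ≤ β ⟨1, h1⟩ ∨ β b ≤ β ⟨1, h1⟩ := by
  have hval : a.val ≠ b.val := Fin.val_ne_of_ne hab
  rcases Nat.eq_zero_or_pos a.val with ha | ha
  · exact .inr (hβ (show 1 ≤ b.val by omega))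
  · exact .inl (hβ ha)

lemma IsEquidistantSet.isClique_exactPower {V : Type*} {G : SimpleGraph V} {t : ℕ}
    {S : Finset V} (hS : IsEquidistantSet G t S) : (exactPower G t).IsClique (S : Set V) :=
  fun _ hu _ hv huv => ⟨huv, hS hu hv huv⟩

lemma exists_isEquidistantSet_nonempty_card_eq_eqNum {V : Type*} [Fintype V] [Nonempty V]
    (G : SimpleGraph V) (t : ℕ) :
    ∃ S : Finset V, IsEquidistantSet G t S ∧ S.Nonempty ∧ S.card = eqNum G t := by
  have hbdd : BddAbove {m | ∃ S : Finset V, IsEquidistantSet G t S ∧ S.card = m} :=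
    ⟨Fintype.card V, fun _ ⟨S, _, hS⟩ => hS ▸ S.card_le_univ⟩
  have hpos : 1 ≤ eqNum G t :=
    le_csSup hbdd ⟨{Classical.arbitrary V}, by simp [IsEquidistantSet], rfl⟩
  obtain ⟨S, hS, hcard⟩ : eqNum G t ∈ {m | ∃ S : Finset V, IsEquidistantSet G t S ∧ S.card = m} :=
    Nat.sSup_mem ⟨0, ∅, by simp [IsEquidistantSet], rfl⟩ hbdd
  exact ⟨S, hS, card_pos.mp (hcard ▸ hpos), hcard⟩

/-- Let `G` be connected on `n ≥ 2` vertices, `t ≥ 1`, with `G^{[#t]}`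
regular, and let `β_1 ≥ ⋯ ≥ β_n` be the adjacency eigenvalues of `G^{[#t]}`. If
`n - β_1 + β_2 > 0` then `eq_t(G) ≤ n (1 + β_2) / (n - β_1 + β_2)`. -/
theorem eqNum_le_haemers_clique_bound {V : Type*} [Fintype V] (G : SimpleGraph V)
    (n : ℕ) (hn : Fintype.card V = n) (hn2 : 2 ≤ n)
    (t : ℕ)
    (hreg : ∃ r : ℕ, ∀ v : V, ((exactPower G t).neighborSet v).ncard = r)
    (hB : ((exactPower G t).adjMatrix ℝ).IsHermitian)
    (β : Fin n → ℝ) (hanti : Antitone β)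
    (hlist : ∃ e : Fin n ≃ V, ∀ i, β i = hB.eigenvalues (e i))
    (hpos : (0 : ℝ) < n - β ⟨0, by omega⟩ + β ⟨1, by omega⟩) :
    (eqNum G t : ℝ) ≤
      n * (1 + β ⟨1, by omega⟩) / (n - β ⟨0, by omega⟩ + β ⟨1, by omega⟩) := by
  obtain ⟨e, he⟩ := hlist
  obtain ⟨r, hr⟩ := hreg
  have : Nonempty V := ⟨e ⟨0, by omega⟩⟩
  have hd : (exactPower G t).IsRegularOfDegree r := fun v => by
    rw [← hr v, ← card_neighborFinset_eq_degree, neighborFinset_def, Set.ncard_eq_toFinset_card']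
  have hβ : ∀ v, hB.eigenvalues v = β (e.symm v) := fun v => by rw [he, e.apply_symm_apply]
  have hr_eq : (r : ℝ) = β ⟨0, by omega⟩ := by
    obtain ⟨i, hi⟩ := hB.exists_eigenvalues_eq hd.adjMatrix_mulVec_one one_ne_zero
    refine le_antisymm ?_ ?_
    · rw [← hi, hβ]
      exact hanti (Nat.zero_le _)
    · rw [he]
      exact hd.eigenvalues_le hB _
  have hsecond : ∀ z : V → ℝ, 1 ⬝ᵥ z = 0 →
      z ⬝ᵥ (exactPower G t).adjMatrix ℝ *ᵥ z ≤ β ⟨1, by omega⟩ * (z ⬝ᵥ z) :=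
    fun z hz => hB.dotProduct_mulVec_le_of_dotProduct_eq_zero hd.adjMatrix_mulVec_one one_ne_zero
      hz (hd.eigenvalues_le hB) fun i j hij => by
        simpa only [hβ] using hanti.apply_le_or_apply_le_of_ne _ (e.symm.injective.ne hij)
  obtain ⟨S, hS, hSne, hcard⟩ := exists_isEquidistantSet_nonempty_card_eq_eqNum G t
  have hbound := hS.isClique_exactPower.card_mul_le_of_isRegularOfDegree hd hsecond hSne
  rw [hcard, hn, hr_eq] at hbound
  rw [le_div_iff₀ hpos]
  linarith
end

section
/- Let G be a connected finite simple graph on n vertices, let D be its distance matrix, and let λ̃_1 ≥ λ̃_2 ≥ ... ≥ λ̃_n be the eigenvalues of D. Then for every integer t ≥ 1, eq_t(G) ≤ |{i ∈ {1,...,n} : λ̃_i ≤ −t}| + 1. -/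
open SimpleGraph

/-- The distance matrix of `G`, as a real matrix. -/
noncomputable def distMatrix {V : Type*} (G : SimpleGraph V) : Matrix V V ℝ :=
  Matrix.of fun u v => (G.dist u v : ℝ)

/-!
Let `S` be a `t`-equidistant set. On the space of vectors supported on `S` with coordinate sum
zero, of dimension `|S| - 1`, the distance matrix acts as `t (J - I)`, so its quadratic form is
`-t ‖x‖²` there. A subspace on which the quadratic form of a symmetric matrix is at most `c ‖x‖²`
meets the span of the eigenvectors with eigenvalue `> c` only in `0`, so its dimension is at most
the number of eigenvalues `≤ c` (the easy half of Courant–Fischer).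
-/

open Matrix Module

section

open Finset

namespace Matrix.IsHermitian

variable {V : Type*} [Fintype V] [DecidableEq V] {A : Matrix V V ℝ} (hA : A.IsHermitian)

local notation "U" => (hA.eigenvectorUnitary : Matrix V V ℝ)

lemma star_eigenvectorUnitary_eq_transpose : star U = Uᵀ := by
  rw [star_eq_conjTranspose, conjTranspose_eq_transpose_of_trivial]

lemma dotProduct_mulVec_eq_sum_eigenvalues_mul_sq (x : V → ℝ) :
    x ⬝ᵥ A *ᵥ x = ∑ v, hA.eigenvalues v * (star U *ᵥ x) v ^ 2 := by
  conv_lhs => rw [hA.spectral_theorem, Unitary.conjStarAlgAut_apply]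
  rw [← mulVec_mulVec, ← mulVec_mulVec, dotProduct_mulVec, ← mulVec_transpose,
    ← hA.star_eigenvectorUnitary_eq_transpose, RCLike.ofReal_real_eq_id, Function.id_comp,
    dotProduct]
  simp only [mulVec_diagonal]
  exact Finset.sum_congr rfl fun v _ => by ring

lemma dotProduct_self_eq_sum_sq (x : V → ℝ) : x ⬝ᵥ x = ∑ v, (star U *ᵥ x) v ^ 2 := by
  have hU : U * star U = 1 := Unitary.coe_mul_star_self hA.eigenvectorUnitary
  calc x ⬝ᵥ x = x ⬝ᵥ (U * star U) *ᵥ x := by rw [hU, one_mulVec]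
    _ = (star U *ᵥ x) ⬝ᵥ (star U *ᵥ x) := by
      rw [← mulVec_mulVec, dotProduct_mulVec, ← mulVec_transpose,
        ← hA.star_eigenvectorUnitary_eq_transpose]
    _ = ∑ v, (star U *ᵥ x) v ^ 2 := by simp only [dotProduct, sq]

lemma eq_zero_of_dotProduct_mulVec_le {c : ℝ} {x : V → ℝ} (hx : x ⬝ᵥ A *ᵥ x ≤ c * (x ⬝ᵥ x))
    (hlow : ∀ v, hA.eigenvalues v ≤ c → (star U *ᵥ x) v = 0) : x = 0 := by
  set y := star U *ᵥ x
  have hterm_nonneg : ∀ v ∈ univ, 0 ≤ (hA.eigenvalues v - c) * y v ^ 2 := fun v _ => by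
    rcases le_or_gt (hA.eigenvalues v) c with hv | hv
    · simp [hlow v hv]
    · exact mul_nonneg (sub_nonneg.2 hv.le) (sq_nonneg _)
  have hsum_nonpos : ∑ v, (hA.eigenvalues v - c) * y v ^ 2 ≤ 0 := by
    simp only [sub_mul, Finset.sum_sub_distrib, ← Finset.mul_sum]
    rw [← hA.dotProduct_mulVec_eq_sum_eigenvalues_mul_sq, ← hA.dotProduct_self_eq_sum_sq]
    linarith
  have hy : ∀ v, y v = 0 := fun v => by
    rcases le_or_gt (hA.eigenvalues v) c with hv | hv
    · exact hlow v hv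
    · have := (Finset.sum_eq_zero_iff_of_nonneg hterm_nonneg).1
        (le_antisymm hsum_nonpos (Finset.sum_nonneg hterm_nonneg)) v (mem_univ v)
      simpa [(sub_pos.2 hv).ne'] using this
  rw [← dotProduct_self_eq_zero, hA.dotProduct_self_eq_sum_sq]
  simp [y, hy]

theorem finrank_le_card_eigenvalues_le {c : ℝ} (W : Submodule ℝ (V → ℝ))
    (hW : ∀ x ∈ W, x ⬝ᵥ A *ᵥ x ≤ c * (x ⬝ᵥ x)) :
    finrank ℝ W ≤ #{v | hA.eigenvalues v ≤ c} := by
  let restrictLow : W →ₗ[ℝ] ({v // hA.eigenvalues v ≤ c} → ℝ) :=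
    LinearMap.funLeft ℝ ℝ Subtype.val ∘ₗ mulVecLin (star U) ∘ₗ W.subtype
  by_contra! hlt
  rw [← Fintype.card_subtype, ← finrank_fintype_fun_eq_card ℝ] at hlt
  obtain ⟨x, hx, hx0⟩ :=
    (Submodule.ne_bot_iff _).1 (LinearMap.ker_ne_bot_of_finrank_lt (f := restrictLow) hlt)
  refine hx0 (Subtype.ext (hA.eq_zero_of_dotProduct_mulVec_le (hW x x.2) fun v hv => ?_))
  simpa [restrictLow] using congrFun (LinearMap.mem_ker.1 hx) ⟨v, hv⟩

end Matrix.IsHermitian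

variable {V : Type*} [Fintype V]

def zeroSumSubmodule (S : Finset V) : Submodule ℝ (V → ℝ) :=
  LinearMap.ker ((LinearMap.funLeft ℝ ℝ ((↑) : {v // v ∉ S} → V)).prod (∑ v, LinearMap.proj v))

lemma mem_zeroSumSubmodule {S : Finset V} {x : V → ℝ} :
    x ∈ zeroSumSubmodule S ↔ (∀ v ∉ S, x v = 0) ∧ ∑ v, x v = 0 := by
  simp [zeroSumSubmodule, funext_iff, LinearMap.funLeft]

lemma card_le_finrank_zeroSumSubmodule_add_one [DecidableEq V] (S : Finset V) :
    #S ≤ finrank ℝ (zeroSumSubmodule S) + 1 := by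
  let f := (LinearMap.funLeft ℝ ℝ ((↑) : {v // v ∉ S} → V)).prod (∑ v, LinearMap.proj v)
  have hnullity := LinearMap.finrank_range_add_finrank_ker f
  have hrange : finrank ℝ (LinearMap.range f) ≤ Fintype.card V - #S + 1 := by
    refine (Submodule.finrank_le _).trans_eq ?_
    rw [finrank_prod, finrank_fintype_fun_eq_card, Fintype.card_subtype_compl,
      Fintype.card_coe, finrank_self]
  have hS : #S ≤ Fintype.card V := card_le_univ S
  rw [finrank_fintype_fun_eq_card] at hnullity
  change _ ≤ finrank ℝ (LinearMap.ker f) + 1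
  omega

namespace IsEquidistantSet

variable [DecidableEq V] {G : SimpleGraph V} {t : ℕ} {S : Finset V}

lemma distMatrix_mulVec_apply (hS : IsEquidistantSet G t S) {x : V → ℝ}
    (hx : ∀ v ∉ S, x v = 0) {u : V} (hu : u ∈ S) :
    (distMatrix G *ᵥ x) u = t * ∑ v, x v - t * x u := by
  have hterm : ∀ v, distMatrix G u v * x v = t * x v - if u = v then t * x v else 0 := by
    intro v
    by_cases huv : u = v
    · simp [huv, distMatrix]
    by_cases hv : v ∈ S
    · simp [huv, distMatrix, hS hu hv huv]
    · simp [huv, hx v hv]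
  simp only [mulVec, dotProduct, hterm, Finset.sum_sub_distrib, ← Finset.mul_sum,
    Finset.sum_ite_eq, mem_univ, if_true]

lemma dotProduct_distMatrix_mulVec (hS : IsEquidistantSet G t S) {x : V → ℝ}
    (hx : x ∈ zeroSumSubmodule S) : x ⬝ᵥ distMatrix G *ᵥ x = -t * (x ⬝ᵥ x) := by
  obtain ⟨hsupp, hsum⟩ := mem_zeroSumSubmodule.1 hx
  rw [dotProduct, dotProduct, Finset.mul_sum]
  refine Finset.sum_congr rfl fun u _ => ?_
  by_cases hu : u ∈ S
  · rw [hS.distMatrix_mulVec_apply hsupp hu, hsum]; ring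
  · simp [hsupp u hu]

theorem card_le_card_eigenvalues_le_add_one (hS : IsEquidistantSet G t S)
    (hD : (distMatrix G).IsHermitian) : #S ≤ #{v | hD.eigenvalues v ≤ -(t : ℝ)} + 1 :=
  (card_le_finrank_zeroSumSubmodule_add_one S).trans <| Nat.add_le_add_right
    (hD.finrank_le_card_eigenvalues_le _ fun _ hx => (hS.dotProduct_distMatrix_mulVec hx).le) 1

end IsEquidistantSet

end

theorem eqNum_le_distance_spectrum_bound_general {V : Type*} [Fintype V] [DecidableEq V]
    (G : SimpleGraph V)
    (n : ℕ)
    (hD : (distMatrix G).IsHermitian)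
    (lam : Fin n → ℝ)
    (hlist : ∃ e : Fin n ≃ V, ∀ i, lam i = hD.eigenvalues (e i)) :
    ∀ t : ℕ, 1 ≤ t → eqNum G t ≤ {i : Fin n | lam i ≤ -(t : ℝ)}.ncard + 1 := by
  obtain ⟨e, he⟩ := hlist
  intro t _
  have hcount : {i : Fin n | lam i ≤ -(t : ℝ)}.ncard =
      (Finset.univ.filter fun v => hD.eigenvalues v ≤ -(t : ℝ)).card := by
    have hpre : {i : Fin n | lam i ≤ -(t : ℝ)} = e ⁻¹' {v | hD.eigenvalues v ≤ -(t : ℝ)} := by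
      ext i; simp [he]
    rw [hpre, Set.ncard_preimage_of_injective_subset_range e.injective (by simp),
      ← Set.ncard_coe_finset, Finset.coe_filter_univ]
  rw [hcount]
  refine csSup_le ⟨0, ∅, by simp [IsEquidistantSet], rfl⟩ ?_
  rintro _ ⟨S, hS, rfl⟩
  exact hS.card_le_card_eigenvalues_le_add_one hD

/-- Let `G` be connected on `n` vertices with distance matrix eigenvalues
`λ̃_1 ≥ ⋯ ≥ λ̃_n`. Then for every `t ≥ 1`,
`eq_t(G) ≤ #{i : λ̃_i ≤ -t} + 1`. -/
theorem eqNum_le_distance_spectrum_bound {V : Type*} [Fintype V] [DecidableEq V]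
    (G : SimpleGraph V) (hG : G.Connected)
    (n : ℕ) (hn : Fintype.card V = n)
    (hD : (distMatrix G).IsHermitian)
    (lam : Fin n → ℝ) (hanti : Antitone lam)
    (hlist : ∃ e : Fin n ≃ V, ∀ i, lam i = hD.eigenvalues (e i)) :
    ∀ t : ℕ, 1 ≤ t → eqNum G t ≤ {i : Fin n | lam i ≤ -(t : ℝ)}.ncard + 1 :=
  eqNum_le_distance_spectrum_bound_general G n hD lam hlist
end

section
/- Let G be a connected finite simple graph on n ≥ 2 vertices, let D be its distance matrix with eigenvalues λ̃_1 ≥ λ̃_2 ≥ ... ≥ λ̃_n. Suppose there exists an integer t* with 1 ≤ t* ≤ diam(G) such that eq_{t*}(G) = |{i ∈ {1,...,n} : λ̃_i ≤ −t*}| + 1. Then eq(G) = max{eq_t(G) : 1 ≤ t ≤ t*}. -/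
open SimpleGraph

/-! On the vectors `y` of zero sum supported on a `t`-equidistant set `S`, a space of dimension
at least `|S| - 1`, the quadratic form of the distance matrix is `-t‖y‖²`. On a nonzero vector orthogonal to every
eigenvector with eigenvalue `≤ -t` its Rayleigh quotient exceeds `-t`, so that space has dimension
at most `#{i : λ̃ᵢ ≤ -t}`, giving `eq_t(G) ≤ #{i : λ̃ᵢ ≤ -t} + 1`. The bound decreases in `t` and is
attained at `t*`, so no `t > t*` beats `t*`. -/

open Finset Matrix
open scoped RealInnerProductSpace

section Eigenbasis

variable {ι E : Type*} [Fintype ι] [NormedAddCommGroup E] [InnerProductSpace ℝ E]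
  {T : E →ₗ[ℝ] E} {b : OrthonormalBasis ι ℝ E} {μ : ι → ℝ}

lemma inner_apply_self_eq_sum (hb : ∀ i, T (b i) = μ i • b i) (x : E) :
    ⟪T x, x⟫ = ∑ i, μ i * ⟪b i, x⟫ ^ 2 := by
  have hTx : T x = ∑ i, (μ i * ⟪b i, x⟫) • b i := by
    conv_lhs => rw [← b.sum_repr' x]
    simp only [map_sum, map_smul, hb, smul_smul, mul_comm]
  rw [hTx, sum_inner]
  simp only [real_inner_smul_left]
  exact sum_congr rfl fun i _ => by ring

lemma mul_norm_sq_lt_inner_apply_self (hb : ∀ i, T (b i) = μ i • b i) {c : ℝ} {x : E}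
    (hx : x ≠ 0) (h : ∀ i, μ i ≤ c → ⟪b i, x⟫ = 0) : c * ‖x‖ ^ 2 < ⟪T x, x⟫ := by
  obtain ⟨j, hj⟩ : ∃ j, ⟪b j, x⟫ ≠ 0 := by
    by_contra! h0
    exact hx (by simpa [h0] using (b.sum_repr' x).symm)
  have hcoef : ∀ i, ⟪b i, x⟫ ≠ 0 → c < μ i := fun i hi => lt_of_not_ge (mt (h i) hi)
  rw [inner_apply_self_eq_sum hb, ← b.sum_sq_inner_right, mul_sum]
  refine sum_lt_sum (fun i _ => ?_) ⟨j, mem_univ j, ?_⟩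
  · by_cases hi : ⟪b i, x⟫ = 0
    · simp [hi]
    · exact mul_le_mul_of_nonneg_right (hcoef i hi).le (sq_nonneg _)
  · exact mul_lt_mul_of_pos_right (hcoef j hj) (by positivity)

lemma finrank_le_card_eigenvalues_le (hb : ∀ i, T (b i) = μ i • b i) {c : ℝ}
    (W : Submodule ℝ E) (hW : ∀ y ∈ W, ⟪T y, y⟫ ≤ c * ‖y‖ ^ 2) :
    Module.finrank ℝ W ≤ #{i | μ i ≤ c} := by
  by_contra! hlt
  let coeffs : W →ₗ[ℝ] ({i | μ i ≤ c} : Finset ι) → ℝ :=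
    LinearMap.pi fun i => (innerSL ℝ (b i) : E →ₗ[ℝ] ℝ) ∘ₗ W.subtype
  have : FiniteDimensional ℝ E := b.toBasis.finiteDimensional_of_finite
  have hker : LinearMap.ker coeffs ≠ ⊥ := LinearMap.ker_ne_bot_of_finrank_lt
    (by rwa [Module.finrank_fintype_fun_eq_card, Fintype.card_coe])
  obtain ⟨y, hy, hy0⟩ := (Submodule.ne_bot_iff _).mp hker
  have hcoeffs : ∀ i, μ i ≤ c → ⟪b i, (y : E)⟫ = 0 := fun i hi =>
    congrFun (LinearMap.mem_ker.mp hy) ⟨i, by simpa using hi⟩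
  exact (hW y y.2).not_gt
    (mul_norm_sq_lt_inner_apply_self hb (by simpa using hy0) hcoeffs)

end Eigenbasis

section DistanceMatrix

variable {V : Type*} [Fintype V] [DecidableEq V]

noncomputable def sumProdRestrictCompl (S : Finset V) :
    EuclideanSpace ℝ V →ₗ[ℝ] ℝ × ((Sᶜ : Finset V) → ℝ) :=
  (∑ v, EuclideanSpace.projₗ v).prod (LinearMap.pi fun v => EuclideanSpace.projₗ v.1)

lemma mem_ker_sumProdRestrictCompl {S : Finset V} {y : EuclideanSpace ℝ V} :
    y ∈ LinearMap.ker (sumProdRestrictCompl S) ↔ ∑ v, y v = 0 ∧ ∀ v ∉ S, y v = 0 := by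
  simp [sumProdRestrictCompl, funext_iff]

lemma card_le_finrank_ker_sumProdRestrictCompl_add_one (S : Finset V) :
    #S ≤ Module.finrank ℝ (LinearMap.ker (sumProdRestrictCompl S)) + 1 := by
  have hrank := LinearMap.finrank_range_add_finrank_ker (sumProdRestrictCompl S)
  have hrange := Submodule.finrank_le (LinearMap.range (sumProdRestrictCompl S))
  simp only [finrank_euclideanSpace, Module.finrank_prod, Module.finrank_self,
    Module.finrank_fintype_fun_eq_card, Fintype.card_coe, card_compl] at hrank hrange
  have := S.card_le_univ
  omega

variable {G : SimpleGraph V} {t : ℕ} {S : Finset V}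

lemma distMatrix_mulVec_apply_of_mem (hS : IsEquidistantSet G t S) {y : V → ℝ}
    (hsum : ∑ v, y v = 0) (hsupp : ∀ v ∉ S, y v = 0) {u : V} (hu : u ∈ S) :
    (distMatrix G *ᵥ y) u = -t * y u := by
  have hterm : ∀ v, (G.dist u v : ℝ) * y v = t * y v - if u = v then t * y v else 0 := by
    intro v
    by_cases huv : u = v
    · simp [huv]
    by_cases hv : v ∈ S
    · simp [hS hu hv huv, huv]
    · simp [hsupp v hv]
  simp only [mulVec, dotProduct, distMatrix, of_apply, hterm, sum_sub_distrib,
    ← mul_sum, hsum, sum_ite_eq, mem_univ, if_true]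
  ring

lemma inner_distMatrix_apply_self_of_mem_ker (hS : IsEquidistantSet G t S)
    {y : EuclideanSpace ℝ V} (hy : y ∈ LinearMap.ker (sumProdRestrictCompl S)) :
    ⟪toEuclideanLin (distMatrix G) y, y⟫ = -t * ‖y‖ ^ 2 := by
  rw [mem_ker_sumProdRestrictCompl] at hy
  have hterm : ∀ u, y u * (distMatrix G *ᵥ y) u = -t * y u ^ 2 := by
    intro u
    by_cases hu : u ∈ S
    · rw [distMatrix_mulVec_apply_of_mem hS hy.1 hy.2 hu]; ring
    · simp [hy.2 u hu]
  simp [EuclideanSpace.real_norm_sq_eq, PiLp.inner_apply, hterm, mul_sum]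

end DistanceMatrix

section EigenvalueBound

variable {V : Type*} [Fintype V] [DecidableEq V] {G : SimpleGraph V}

lemma card_le_card_eigenvalues_le_add_one (hD : (distMatrix G).IsHermitian) {t : ℕ}
    {S : Finset V} (hS : IsEquidistantSet G t S) :
    #S ≤ #{i | hD.eigenvalues i ≤ -(t : ℝ)} + 1 := by
  have hb : ∀ i, toEuclideanLin (distMatrix G) (hD.eigenvectorBasis i) =
      hD.eigenvalues i • hD.eigenvectorBasis i := fun i =>
    congrArg (WithLp.toLp 2) (hD.mulVec_eigenvectorBasis i)
  have hW := finrank_le_card_eigenvalues_le hb (LinearMap.ker (sumProdRestrictCompl S))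
    fun y hy => (inner_distMatrix_apply_self_of_mem_ker hS hy).le
  have := card_le_finrank_ker_sumProdRestrictCompl_add_one S
  omega

lemma eqNum_le_card_eigenvalues_le_add_one (hD : (distMatrix G).IsHermitian) (t : ℕ) :
    eqNum G t ≤ #{i | hD.eigenvalues i ≤ -(t : ℝ)} + 1 :=
  csSup_le ⟨0, ∅, by simp [IsEquidistantSet]⟩ fun _ ⟨_, hS, hcard⟩ =>
    hcard ▸ card_le_card_eigenvalues_le_add_one hD hS

end EigenvalueBound

lemma sup_Icc_eq_sup_Icc_of_le {α : Type*} [SemilatticeSup α] [OrderBot α] {f : ℕ → α}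
    {a m N : ℕ} (ham : a ≤ m) (hmN : m ≤ N) (h : ∀ t, m < t → t ≤ N → f t ≤ f m) :
    (Icc a N).sup f = (Icc a m).sup f := by
  refine le_antisymm (Finset.sup_le fun t ht => ?_) (sup_mono (Icc_subset_Icc_right hmN))
  rw [mem_Icc] at ht
  rcases le_or_gt t m with htm | hmt
  · exact le_sup (mem_Icc.mpr ⟨ht.1, htm⟩)
  · exact (h t hmt ht.2).trans (le_sup (mem_Icc.mpr ⟨ham, le_rfl⟩))

theorem eqTotal_eq_sup_up_to_tstar_general {V : Type*} [Fintype V] [DecidableEq V]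
    (G : SimpleGraph V) (n : ℕ) (hD : (distMatrix G).IsHermitian) (lam : Fin n → ℝ)
    (hlist : ∃ e : Fin n ≃ V, ∀ i, lam i = hD.eigenvalues (e i))
    (tstar : ℕ) (ht1 : 1 ≤ tstar) (ht2 : tstar ≤ G.diam)
    (htight : eqNum G tstar = {i : Fin n | lam i ≤ -(tstar : ℝ)}.ncard + 1) :
    eqTotalNum G = (Finset.Icc 1 tstar).sup (eqNum G) := by
  obtain ⟨e, he⟩ := hlist
  have hcount : {i : Fin n | lam i ≤ -(tstar : ℝ)}.ncard =
      #{v | hD.eigenvalues v ≤ -(tstar : ℝ)} := by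
    simp_rw [he]
    rw [← Set.ncard_coe_finset, coe_filter_univ]
    exact Set.ncard_preimage_of_injective_subset_range
      (s := {v | hD.eigenvalues v ≤ -(tstar : ℝ)}) e.injective (by simp)
  refine sup_Icc_eq_sup_Icc_of_le ht1 ht2 fun t htt _ => ?_
  calc eqNum G t ≤ #{v | hD.eigenvalues v ≤ -(t : ℝ)} + 1 :=
        eqNum_le_card_eigenvalues_le_add_one hD t
    _ ≤ #{v | hD.eigenvalues v ≤ -(tstar : ℝ)} + 1 := by gcongr
    _ = eqNum G tstar := by rw [htight, hcount]

/-- Let `G` be connected on `n ≥ 2` vertices with distance matrix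
eigenvalues `λ̃_1 ≥ ⋯ ≥ λ̃_n`. If there is `1 ≤ t* ≤ diam(G)` with
`eq_{t*}(G) = #{i : λ̃_i ≤ -t*} + 1`, then `eq(G) = max {eq_t(G) : 1 ≤ t ≤ t*}`. -/
theorem eqTotal_eq_sup_up_to_tstar {V : Type*} [Fintype V] [DecidableEq V]
    (G : SimpleGraph V) (hG : G.Connected)
    (n : ℕ) (hn : Fintype.card V = n) (hn2 : 2 ≤ n)
    (hD : (distMatrix G).IsHermitian)
    (lam : Fin n → ℝ) (hanti : Antitone lam)
    (hlist : ∃ e : Fin n ≃ V, ∀ i, lam i = hD.eigenvalues (e i))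
    (tstar : ℕ) (ht1 : 1 ≤ tstar) (ht2 : tstar ≤ G.diam)
    (htight : eqNum G tstar = {i : Fin n | lam i ≤ -(tstar : ℝ)}.ncard + 1) :
    eqTotalNum G = (Finset.Icc 1 tstar).sup (eqNum G) :=
  eqTotal_eq_sup_up_to_tstar_general G n hD lam hlist tstar ht1 ht2 htight
end
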